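/- arXiv:1212.1346 — 7 statements merged into one kernel-verified Lean document; each statement's English description precedes it below -/
import Mathlib

section
/- For every nondeterministic finite automaton A with n states over an alphabet Σ of m letters, there exists a nondeterministic finite automaton with at most n(m+1)+1 states accepting exactly the nonunary part of L(A), i.e., the set of all nonunary words belonging to L(A). -/
/-!
Run `A` in parallel with a memory of the first letter read, forgotten (set to `none`) as soon as
a different letter shows up; accept when `A` accepts and the memory is gone. The states are
pairs `(s, k)` with `s` a state of `A` and `k : Option α`, i.e. `n * (m + 1)` of them, plus one
initial state: only the empty word ends there, so it need not be paired with the states of `A`.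
-/

/-- A word is unary if all of its letters are equal to one single letter
(the empty word is unary). -/
def IsUnaryWord {α : Type*} (w : List α) : Prop :=
  ∀ c ∈ w, ∀ c' ∈ w, c = c'

theorem isUnaryWord_cons_iff {α : Type*} (b : α) (w : List α) :
    IsUnaryWord (b :: w) ↔ ∀ c ∈ w, c = b := by
  refine ⟨fun h c hc => h c (List.mem_cons_of_mem b hc) b List.mem_cons_self, fun h => ?_⟩
  have h' : ∀ c ∈ b :: w, c = b := by simpa using h
  intro c hc c' hc'
  rw [h' c hc, h' c' hc']

section UnaryLetter

variable {α : Type*} [DecidableEq α]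

/-- `some a` while only the letter `a` has been read, `none` once the word is nonunary. -/
def unaryStep (k : Option α) (b : α) : Option α :=
  k.bind fun a => if b = a then some a else none

@[simp]
theorem foldl_unaryStep_none (w : List α) : w.foldl unaryStep none = none := by
  induction w with
  | nil => rfl
  | cons c w ih => exact ih

theorem foldl_unaryStep_some (b : α) (w : List α) :
    w.foldl unaryStep (some b) = if ∀ c ∈ w, c = b then some b else none := by
  induction w with
  | nil => simp
  | cons c w ih =>
    by_cases hcb : c = b
    · simp [unaryStep, hcb, ih]
    · simp [unaryStep, hcb]

theorem foldl_unaryStep_eq_none_iff (b : α) (w : List α) :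
    w.foldl unaryStep (some b) = none ↔ ¬ IsUnaryWord (b :: w) := by
  rw [foldl_unaryStep_some, isUnaryWord_cons_iff]
  split_ifs with h <;> simpa using h

end UnaryLetter

namespace NFA

variable {α σ : Type*} [DecidableEq α] (A : NFA α σ)

def nonunaryPart : NFA α (Option (σ × Option α)) where
  step
    | none, b => (fun t => some (t, some b)) '' A.stepSet A.start b
    | some (s, k), b => (fun t => some (t, unaryStep k b)) '' A.step s b
  start := {none}
  accept := (fun s => some (s, none)) '' A.accept

theorem nonunaryPart_stepSet_image (S : Set σ) (k : Option α) (b : α) :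
    A.nonunaryPart.stepSet ((fun s => some (s, k)) '' S) b =
      (fun t => some (t, unaryStep k b)) '' A.stepSet S b := by
  simp only [stepSet, Set.biUnion_image, Set.image_iUnion₂]
  rfl

theorem nonunaryPart_eval_cons (b : α) (w : List α) :
    A.nonunaryPart.eval (b :: w) =
      (fun s => some (s, w.foldl unaryStep (some b))) '' A.eval (b :: w) := by
  induction w using List.reverseRecOn with
  | nil =>
    rw [eval_singleton, eval_singleton]
    exact A.nonunaryPart.stepSet_singleton none b
  | append_singleton w c ih =>
    rw [← List.cons_append, eval_append_singleton, eval_append_singleton, ih,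
      nonunaryPart_stepSet_image, List.foldl_append, List.foldl_cons, List.foldl_nil]

theorem accepts_nonunaryPart :
    A.nonunaryPart.accepts = {w | w ∈ A.accepts ∧ ¬ IsUnaryWord w} := by
  ext w
  change (∃ q ∈ A.nonunaryPart.accept, q ∈ A.nonunaryPart.eval w) ↔
    (∃ s ∈ A.accept, s ∈ A.eval w) ∧ ¬ IsUnaryWord w
  cases w with
  | nil =>
    have hnil : ∀ q ∈ A.nonunaryPart.accept, q ∉ A.nonunaryPart.eval [] := by
      rintro _ ⟨s, -, rfl⟩ h
      exact Option.some_ne_none _ h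
    simpa [IsUnaryWord] using hnil
  | cons b w =>
    rw [nonunaryPart_eval_cons, ← foldl_unaryStep_eq_none_iff]
    simp [nonunaryPart, ← and_assoc, exists_and_right]

end NFA

/-- For every NFA `A` with `n` states over an alphabet of `m` letters,
there exists an NFA with at most `n*(m+1)+1` states accepting exactly the nonunary part
of `L(A)`, i.e., the set of all nonunary words belonging to `L(A)`. -/
theorem nfa_nonunary_part (α σ : Type) [Fintype α] [Fintype σ] (m n : ℕ)
    (hα : Fintype.card α = m) (hσ : Fintype.card σ = n) (A : NFA α σ) :
    ∃ (σ' : Type) (_ : Fintype σ') (B : NFA α σ'),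
      Fintype.card σ' ≤ n * (m + 1) + 1 ∧
      B.accepts = {w | w ∈ A.accepts ∧ ¬ IsUnaryWord w} := by
  classical
  refine ⟨_, inferInstance, A.nonunaryPart, ?_, A.accepts_nonunaryPart⟩
  simp [Fintype.card_option, Fintype.card_prod, hα, hσ]
end

section
/- For every context-free grammar G in Chomsky normal form with h variables over a terminal alphabet Σ of m letters, there exists a context-free grammar in Chomsky normal form with at most mh−m+1 variables generating exactly the nonunary part of L(G), i.e., the set of all nonunary words belonging to L(G). -/
/-- A context-free grammar is in Chomsky normal form if every production has one of the
forms `B → CD` (with `C, D` different from the start variable), `B → a`, or `S → ε`. -/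
def IsCNF {T : Type*} (G : ContextFreeGrammar T) : Prop :=
  ∀ r ∈ G.rules,
    (∃ a : T, r.output = [Symbol.terminal a]) ∨
    (∃ C D : G.NT, C ≠ G.initial ∧ D ≠ G.initial ∧
      r.output = [Symbol.nonterminal C, Symbol.nonterminal D]) ∨
    (r.input = G.initial ∧ r.output = [])

/-!
Keep the start symbol `S` and split every other variable `A` into the variables `(A, a)`, one
per letter `a`, where `(A, a)` is to generate the words of `L(A)` that are powers of `a` or
nonunary. A rule `A → a` survives as `(A, a) → a`, and a rule `A → BC` becomes
`(A, a) → (B, b)(C, c)` whenever `b ≠ c` or `b = c = a`; from `S` only the rules with `b ≠ c`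
are kept. This is correct because in Chomsky normal form a derivation from `A ≠ S` splits a word
into two nonempty factors, and `uv` is nonunary or a power of `a` exactly when, for letters
`b, c` chosen as above, `u` is nonunary or a power of `b` and `v` is nonunary or a power of `c`.
-/

open ContextFreeGrammar Symbol

namespace ContextFreeRule

variable {T N : Type*} {r : ContextFreeRule T N}

lemma Rewrites.append_split {u v w : List (Symbol T N)} (h : r.Rewrites (u ++ v) w) :
    (∃ u', r.Rewrites u u' ∧ w = u' ++ v) ∨ (∃ v', r.Rewrites v v' ∧ w = u ++ v') := by
  induction u generalizing w with
  | nil => exact Or.inr ⟨w, h, rfl⟩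
  | cons x u ih =>
    cases h with
    | head => exact Or.inl ⟨r.output ++ u, .head u, by simp⟩
    | cons _ h =>
      rcases ih h with ⟨u', hu, rfl⟩ | ⟨v', hv, rfl⟩
      · exact Or.inl ⟨x :: u', hu.cons x, rfl⟩
      · exact Or.inr ⟨v', hv, rfl⟩

lemma Rewrites.eq_of_singleton {A : N} {w : List (Symbol T N)}
    (h : r.Rewrites [nonterminal A] w) : r.input = A ∧ w = r.output := by
  cases h with
  | head => simp
  | cons _ h => cases h

end ContextFreeRule

namespace ContextFreeGrammar

variable {T : Type*} {g : ContextFreeGrammar T}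

lemma Derives.append_split {u v w : List (Symbol T g.NT)} (h : g.Derives (u ++ v) w) :
    ∃ u' v', w = u' ++ v' ∧ g.Derives u u' ∧ g.Derives v v' := by
  induction h with
  | refl => exact ⟨u, v, rfl, .refl u, .refl v⟩
  | tail _ hp ih =>
    obtain ⟨u', v', rfl, hu, hv⟩ := ih
    obtain ⟨r, hr, hrw⟩ := hp
    rcases hrw.append_split with ⟨u'', h', rfl⟩ | ⟨v'', h', rfl⟩
    · exact ⟨u'', v', rfl, hu.trans_produces ⟨r, hr, h'⟩, hv⟩
    · exact ⟨u', v'', rfl, hu, hv.trans_produces ⟨r, hr, h'⟩⟩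

lemma Derives.append {u u' v v' : List (Symbol T g.NT)} (hu : g.Derives u u')
    (hv : g.Derives v v') : g.Derives (u ++ v) (u' ++ v') :=
  (hu.append_right v).trans (hv.append_left u')

lemma derives_of_mem_rules {r : ContextFreeRule T g.NT} (hr : r ∈ g.rules) :
    g.Derives [nonterminal r.input] r.output :=
  Produces.single ⟨r, hr, .input_output⟩

lemma eq_of_derives_map_terminal {w : List T} {v : List (Symbol T g.NT)}
    (h : g.Derives (w.map terminal) v) : v = w.map terminal := by
  rcases h.eq_or_head with rfl | ⟨_, ⟨r, _, hr⟩, _⟩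
  · rfl
  · simpa using hr.nonterminal_input_mem

lemma Derives.exists_rule_of_nonterminal {A : g.NT} {w : List T}
    (h : g.Derives [nonterminal A] (w.map terminal)) :
    ∃ r ∈ g.rules, r.input = A ∧ g.Derives r.output (w.map terminal) := by
  rcases h.eq_or_head with h | ⟨v, ⟨r, hr, hrw⟩, hv⟩
  · cases w <;> simp at h
  · obtain ⟨rfl, rfl⟩ := hrw.eq_of_singleton
    exact ⟨r, hr, rfl, hv⟩

end ContextFreeGrammar

namespace IsCNF

variable {T : Type*} {g : ContextFreeGrammar T}

lemma forall_eq_initial_of_derives_nil (hg : IsCNF g) {s : List (Symbol T g.NT)}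
    (h : g.Derives s []) : ∀ x ∈ s, x = nonterminal g.initial := by
  induction h using Relation.ReflTransGen.head_induction_on with
  | refl => simp
  | head hp _ ih =>
    obtain ⟨r, hr, hrw⟩ := hp
    obtain ⟨p, q, rfl, rfl⟩ := hrw.exists_parts
    have hout : ∀ x ∈ r.output, x = nonterminal g.initial := fun x hx => ih x (by simp [hx])
    have hin : r.input = g.initial := by
      rcases hg r hr with ⟨a, ho⟩ | ⟨C, D, hC, -, ho⟩ | ⟨hi, -⟩
      · simp [ho] at hout
      · exact absurd (nonterminal.inj (hout _ (by simp [ho]))) hC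
      · exact hi
    intro x hx
    simp only [List.append_assoc, List.mem_append, List.mem_singleton] at hx
    rcases hx with hx | rfl | hx
    · exact ih x (by simp [hx])
    · rw [hin]
    · exact ih x (by simp [hx])

lemma derives_nonterminal_cases (hg : IsCNF g) {A : g.NT} {w : List T}
    (h : g.Derives [nonterminal A] (w.map terminal)) :
    (∃ a, w = [a] ∧ ⟨A, [terminal a]⟩ ∈ g.rules) ∨
    (∃ B C u v, w = u ++ v ∧ u ≠ [] ∧ v ≠ [] ∧ B ≠ g.initial ∧ C ≠ g.initial ∧
      ⟨A, [nonterminal B, nonterminal C]⟩ ∈ g.rules ∧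
      g.Derives [nonterminal B] (u.map terminal) ∧ g.Derives [nonterminal C] (v.map terminal)) ∨
    (w = [] ∧ A = g.initial ∧ ⟨A, []⟩ ∈ g.rules) := by
  obtain ⟨⟨A, out⟩, hr, rfl, hout⟩ := h.exists_rule_of_nonterminal
  rcases hg _ hr with ⟨a, rfl⟩ | ⟨B, C, hB, hC, rfl⟩ | ⟨rfl, rfl⟩
  · have := eq_of_derives_map_terminal (w := [a]) hout
    exact Or.inl ⟨a, List.map_injective_iff.mpr (fun _ _ => terminal.inj) this, hr⟩
  · obtain ⟨_, _, hw, hBu, hCv⟩ := Derives.append_split (u := [nonterminal B]) hout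
    obtain ⟨u, v, rfl, rfl, rfl⟩ := List.map_eq_append_iff.mp hw
    have ne_nil {D : g.NT} {x : List T} (hD : D ≠ g.initial)
        (hx : g.Derives [nonterminal D] (x.map terminal)) : x ≠ [] := by
      rintro rfl
      simpa [hD] using hg.forall_eq_initial_of_derives_nil hx
    exact Or.inr <| Or.inl ⟨B, C, u, v, rfl, ne_nil hB hBu, ne_nil hC hCv, hB, hC, hr, hBu, hCv⟩
  · have := eq_of_derives_map_terminal (w := []) hout
    exact Or.inr <| Or.inr ⟨by simpa using this, rfl, hr⟩

end IsCNF

section Words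

variable {α : Type*}

lemma IsUnaryWord.mono {u v : List α} (h : u ⊆ v) (hv : IsUnaryWord v) : IsUnaryWord u :=
  fun c hc c' hc' => hv c (h hc) c' (h hc')

lemma isUnaryWord_of_forall_eq {w : List α} {a : α} (h : ∀ x ∈ w, x = a) : IsUnaryWord w :=
  fun c hc c' hc' => (h c hc).trans (h c' hc').symm

lemma exists_mem_ne_of_not_isUnaryWord {w : List α} (hw : ¬ IsUnaryWord w) (c : α) :
    ∃ b ∈ w, b ≠ c := by
  simp only [IsUnaryWord, not_forall] at hw
  obtain ⟨x, hx, y, hy, hxy⟩ := hw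
  by_cases hxc : x = c
  · exact ⟨y, hy, fun hyc => hxy (hxc.trans hyc.symm)⟩
  · exact ⟨x, hx, hxc⟩

def IsPowOrNonunary (o : Option α) (w : List α) : Prop :=
  (∃ a ∈ o, ∀ x ∈ w, x = a) ∨ ¬ IsUnaryWord w

@[simp]
lemma isPowOrNonunary_none {w : List α} : IsPowOrNonunary none w ↔ ¬ IsUnaryWord w := by
  simp [IsPowOrNonunary]

lemma isPowOrNonunary_singleton {o : Option α} {a : α} :
    IsPowOrNonunary o [a] ↔ o = some a := by
  simp [IsPowOrNonunary, IsUnaryWord, eq_comm]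

lemma isPowOrNonunary_head {w : List α} (hw : w ≠ []) :
    IsPowOrNonunary (some (w.head hw)) w := by
  by_cases h : IsUnaryWord w
  · exact Or.inl ⟨_, rfl, fun x hx => h x hx _ (List.head_mem hw)⟩
  · exact Or.inr h

lemma isPowOrNonunary_append_iff {o : Option α} {u v : List α} (hu : u ≠ []) (hv : v ≠ []) :
    IsPowOrNonunary o (u ++ v) ↔ ∃ b c, (b ≠ c ∨ o = some b ∧ c = b) ∧
      IsPowOrNonunary (some b) u ∧ IsPowOrNonunary (some c) v := by
  constructor
  · rintro (⟨a, ha, hall⟩ | hnon)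
    · exact ⟨a, a, Or.inr ⟨ha, rfl⟩, Or.inl ⟨a, rfl, fun x hx => hall x (by simp [hx])⟩,
        Or.inl ⟨a, rfl, fun x hx => hall x (by simp [hx])⟩⟩
    by_cases hu' : IsUnaryWord u
    · by_cases hv' : IsUnaryWord v
      · refine ⟨u.head hu, v.head hv, Or.inl fun hbc => hnon ?_, isPowOrNonunary_head hu,
          isPowOrNonunary_head hv⟩
        refine isUnaryWord_of_forall_eq (a := u.head hu) fun x hx => ?_
        rcases List.mem_append.mp hx with hx | hx
        · exact hu' x hx _ (List.head_mem hu)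
        · exact (hv' x hx _ (List.head_mem hv)).trans hbc.symm
      · obtain ⟨c, -, hcb⟩ := exists_mem_ne_of_not_isUnaryWord hv' (u.head hu)
        exact ⟨u.head hu, c, Or.inl hcb.symm, isPowOrNonunary_head hu, Or.inr hv'⟩
    · obtain ⟨b, -, hbc⟩ := exists_mem_ne_of_not_isUnaryWord hu' (v.head hv)
      exact ⟨b, v.head hv, Or.inl hbc, Or.inr hu', isPowOrNonunary_head hv⟩
  · rintro ⟨b, c, hbc, ⟨_, ⟨⟩, hbu⟩ | hu', ⟨_, ⟨⟩, hcv⟩ | hv'⟩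
    · rcases hbc with hbc | ⟨ho, rfl⟩
      · refine Or.inr fun h => hbc ?_
        rw [← hbu _ (List.head_mem hu), ← hcv _ (List.head_mem hv)]
        exact h _ (by simp [List.head_mem hu]) _ (by simp [List.head_mem hv])
      · exact Or.inl ⟨_, ho, fun x hx => (List.mem_append.mp hx).elim (hbu x) (hcv x)⟩
    · exact Or.inr fun h => hv' (h.mono (List.subset_append_right u v))
    all_goals exact Or.inr fun h => hu' (h.mono (List.subset_append_left u v))

end Words

namespace ContextFreeGrammar

variable {α : Type} (G : ContextFreeGrammar α)

-- `none` is the start symbol `S` and `some (A, a)` the variable `(A, a)`.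
abbrev NonunaryNT : Type := Option ({A : G.NT // A ≠ G.initial} × α)

variable {G}

def NonunaryNT.base : NonunaryNT G → G.NT
  | none => G.initial
  | some p => p.1

def NonunaryNT.letter (X : NonunaryNT G) : Option α := Option.map Prod.snd X

lemma NonunaryNT.not_isPowOrNonunary_nil {X : NonunaryNT G} (hX : X.base = G.initial) :
    ¬ IsPowOrNonunary X.letter [] := by
  rcases X with _ | ⟨⟨A, hA⟩, a⟩
  · simp [letter, IsUnaryWord]
  · exact absurd hX hA

variable (G) [Fintype α] [Fintype G.NT]

open scoped Classical in
noncomputable def nonunaryRules : Finset (ContextFreeRule α (NonunaryNT G)) :=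
  ((Finset.univ : Finset (NonunaryNT G × α)).filter fun (X, a) =>
      X.letter = some a ∧ ⟨X.base, [terminal a]⟩ ∈ G.rules).image
    (fun (X, a) => ⟨X, [terminal a]⟩) ∪
  ((Finset.univ : Finset (NonunaryNT G × ({A // A ≠ G.initial} × α) ×
      ({A // A ≠ G.initial} × α))).filter fun (X, (B, b), (C, c)) =>
      (b ≠ c ∨ X.letter = some b ∧ c = b) ∧
        ⟨X.base, [nonterminal B.1, nonterminal C.1]⟩ ∈ G.rules).image
    (fun (X, Y, Z) => ⟨X, [nonterminal (some Y), nonterminal (some Z)]⟩)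

noncomputable abbrev nonunaryGrammar : ContextFreeGrammar α :=
  ⟨NonunaryNT G, none, nonunaryRules G⟩

noncomputable instance : Fintype (nonunaryGrammar G).NT := by
  classical exact inferInstanceAs (Fintype (NonunaryNT G))

variable {G}

lemma terminal_mem_nonunaryRules {X : NonunaryNT G} {a : α} :
    ⟨X, [terminal a]⟩ ∈ nonunaryRules G ↔
      X.letter = some a ∧ ⟨X.base, [terminal a]⟩ ∈ G.rules := by
  simp [nonunaryRules]

lemma binary_mem_nonunaryRules {X Y Z : NonunaryNT G} :
    ⟨X, [nonterminal Y, nonterminal Z]⟩ ∈ nonunaryRules G ↔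
      ∃ B b C c, Y = some (B, b) ∧ Z = some (C, c) ∧ (b ≠ c ∨ X.letter = some b ∧ c = b) ∧
        ⟨X.base, [nonterminal B.1, nonterminal C.1]⟩ ∈ G.rules := by
  classical
  constructor
  · intro h
    rcases Finset.mem_union.mp h with h | h
    · obtain ⟨_, -, h⟩ := Finset.mem_image.mp h
      simp at h
    · obtain ⟨⟨X', Y', Z'⟩, hf, h⟩ := Finset.mem_image.mp h
      simp only [ContextFreeRule.mk.injEq, List.cons.injEq, nonterminal.injEq, and_true] at h
      obtain ⟨rfl, rfl, rfl⟩ := h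
      exact ⟨Y'.1, Y'.2, Z'.1, Z'.2, rfl, rfl, (Finset.mem_filter.mp hf).2⟩
  · rintro ⟨B, b, C, c, rfl, rfl, h⟩
    refine Finset.mem_union_right _ (Finset.mem_image.mpr ⟨(X, (B, b), (C, c)), ?_, rfl⟩)
    exact Finset.mem_filter.mpr ⟨Finset.mem_univ _, h⟩

lemma nil_notMem_nonunaryRules {X : NonunaryNT G} :
    ⟨X, []⟩ ∉ nonunaryRules G := by
  simp [nonunaryRules]

lemma nonunaryGrammar_isCNF : IsCNF (nonunaryGrammar G) := by
  classical
  intro r hr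
  rcases Finset.mem_union.mp hr with hr | hr
  · obtain ⟨⟨X, a⟩, -, rfl⟩ := Finset.mem_image.mp hr
    exact Or.inl ⟨a, rfl⟩
  · obtain ⟨⟨X, Y, Z⟩, -, rfl⟩ := Finset.mem_image.mp hr
    exact Or.inr <| Or.inl ⟨some Y, some Z, nofun, nofun, rfl⟩

lemma derives_of_nonunaryGrammar_derives {X : NonunaryNT G} {w : List α}
    (h : (nonunaryGrammar G).Derives [nonterminal X] (w.map terminal)) :
    G.Derives [nonterminal X.base] (w.map terminal) ∧ IsPowOrNonunary X.letter w := by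
  rcases nonunaryGrammar_isCNF.derives_nonterminal_cases h with
    ⟨a, rfl, hr⟩ | ⟨Y, Z, u, v, rfl, hu, hv, -, -, hr, hYu, hZv⟩ | ⟨rfl, -, hr⟩
  · obtain ⟨ha, hr⟩ := terminal_mem_nonunaryRules.mp hr
    exact ⟨derives_of_mem_rules hr, isPowOrNonunary_singleton.mpr ha⟩
  · obtain ⟨B, b, C, c, rfl, rfl, hbc, hr⟩ := binary_mem_nonunaryRules.mp hr
    obtain ⟨hBu, hbu⟩ := derives_of_nonunaryGrammar_derives hYu
    obtain ⟨hCv, hcv⟩ := derives_of_nonunaryGrammar_derives hZv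
    rw [List.map_append]
    exact ⟨(derives_of_mem_rules hr).trans (hBu.append hCv),
      (isPowOrNonunary_append_iff hu hv).mpr ⟨b, c, hbc, hbu, hcv⟩⟩
  · exact absurd hr nil_notMem_nonunaryRules
termination_by w.length
decreasing_by all_goals subst_vars; simp [List.length_pos_iff, hu, hv]

lemma nonunaryGrammar_derives_of_derives (hG : IsCNF G) {X : NonunaryNT G} {w : List α}
    (h : G.Derives [nonterminal X.base] (w.map terminal)) (hw : IsPowOrNonunary X.letter w) :
    (nonunaryGrammar G).Derives [nonterminal X] (w.map terminal) := by
  rcases hG.derives_nonterminal_cases h with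
    ⟨a, rfl, hr⟩ | ⟨B, C, u, v, rfl, hu, hv, hB, hC, hr, hBu, hCv⟩ | ⟨rfl, hX, -⟩
  · exact derives_of_mem_rules (g := nonunaryGrammar G)
      (terminal_mem_nonunaryRules.mpr ⟨isPowOrNonunary_singleton.mp hw, hr⟩)
  · obtain ⟨b, c, hbc, hbu, hcv⟩ := (isPowOrNonunary_append_iff hu hv).mp hw
    have hY := nonunaryGrammar_derives_of_derives hG (X := some (⟨B, hB⟩, b)) hBu hbu
    have hZ := nonunaryGrammar_derives_of_derives hG (X := some (⟨C, hC⟩, c)) hCv hcv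
    rw [List.map_append]
    exact (derives_of_mem_rules (g := nonunaryGrammar G) (binary_mem_nonunaryRules.mpr
      ⟨_, b, _, c, rfl, rfl, hbc, hr⟩)).trans (hY.append hZ)
  · exact absurd hw (NonunaryNT.not_isPowOrNonunary_nil hX)
termination_by w.length
decreasing_by all_goals subst_vars; simp [List.length_pos_iff, hu, hv]

theorem nonunaryGrammar_language (hG : IsCNF G) :
    (nonunaryGrammar G).language = {w | w ∈ G.language ∧ ¬ IsUnaryWord w} := by
  ext w
  change _ ↔ w ∈ G.language ∧ ¬ IsUnaryWord w
  rw [mem_language_iff, mem_language_iff]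
  exact ⟨fun h => by
      simpa [NonunaryNT.base, NonunaryNT.letter] using derives_of_nonunaryGrammar_derives h,
    fun ⟨h, hw⟩ => nonunaryGrammar_derives_of_derives hG (X := none) h
      (by simpa [NonunaryNT.letter] using hw)⟩

lemma card_nonunaryGrammar_NT :
    Fintype.card (nonunaryGrammar G).NT = (Fintype.card G.NT - 1) * Fintype.card α + 1 := by
  classical
  simp [Fintype.card_subtype_compl]

end ContextFreeGrammar

/-- For every CFG `G` in Chomsky normal form with `h` variables over a
terminal alphabet of `m` letters, there exists a CFG in Chomsky normal form with at most
`m*h - m + 1` variables generating exactly the nonunary part of `L(G)`. -/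
theorem cnf_nonunary_part (α : Type) [Fintype α] (m h : ℕ) (hα : Fintype.card α = m)
    (G : ContextFreeGrammar α) (hG : IsCNF G)
    (fG : Fintype G.NT) (hh : @Fintype.card G.NT fG = h) :
    ∃ (G' : ContextFreeGrammar α) (fG' : Fintype G'.NT),
      IsCNF G' ∧
      @Fintype.card G'.NT fG' ≤ m * h - m + 1 ∧
      G'.language = {w | w ∈ G.language ∧ ¬ IsUnaryWord w} := by
  let _ := fG
  subst hα hh
  refine ⟨nonunaryGrammar G, inferInstance, nonunaryGrammar_isCNF, ?_, nonunaryGrammar_language hG⟩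
  rw [card_nonunaryGrammar_NT, Nat.sub_mul, one_mul, mul_comm]
end

section
/- For every context-free grammar G in Chomsky normal form with h variables over a terminal alphabet Σ = {a_1, …, a_m} and every i ∈ {1, …, m}, there exists a context-free grammar in Chomsky normal form with at most h variables generating exactly the unary part L(G) ∩ {a_i}^* of L(G). -/
namespace ContextFreeGrammar

variable {T : Type*}

open scoped Classical in
noncomputable def restrictTerminals (g : ContextFreeGrammar T) (p : T → Prop) :
    ContextFreeGrammar T where
  NT := g.NT
  initial := g.initial
  rules := g.rules.filter fun r => ∀ t, Symbol.terminal t ∈ r.output → p t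

variable {g : ContextFreeGrammar T} {p : T → Prop}

lemma mem_rules_restrictTerminals {r : ContextFreeRule T g.NT} :
    r ∈ (g.restrictTerminals p).rules ↔
      r ∈ g.rules ∧ ∀ t, Symbol.terminal t ∈ r.output → p t := by
  classical exact Finset.mem_filter

lemma Derives.terminal_mem {u v : List (Symbol T g.NT)} (huv : g.Derives u v) {t : T}
    (ht : Symbol.terminal t ∈ u) : Symbol.terminal t ∈ v := by
  induction huv with
  | refl => exact ht
  | tail _ hstep ih =>
    obtain ⟨r, -, hr⟩ := hstep
    obtain ⟨x, y, rfl, rfl⟩ := hr.exists_parts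
    simp only [List.mem_append, List.mem_singleton, reduceCtorEq, or_false] at ih ⊢
    tauto

lemma Derives.of_restrictTerminals {u v : List (Symbol T g.NT)}
    (huv : (g.restrictTerminals p).Derives u v) : g.Derives u v := by
  induction huv with
  | refl => rfl
  | tail _ hstep ih =>
    obtain ⟨r, hr, hrw⟩ := hstep
    exact ih.trans_produces ⟨r, (mem_rules_restrictTerminals.1 hr).1, hrw⟩

lemma Derives.terminals_of_restrictTerminals {u v : List (Symbol T g.NT)}
    (huv : (g.restrictTerminals p).Derives u v) (hu : ∀ t, Symbol.terminal t ∈ u → p t) :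
    ∀ t, Symbol.terminal t ∈ v → p t := by
  induction huv with
  | refl => exact hu
  | tail _ hstep ih =>
    obtain ⟨r, hr, hrw⟩ := hstep
    obtain ⟨x, y, rfl, rfl⟩ := hrw.exists_parts
    intro t ht
    rcases List.mem_append.1 ht with hxr | hy
    rcases List.mem_append.1 hxr with hx | hr'
    · exact ih t (List.mem_append_left _ (List.mem_append_left _ hx))
    · exact (mem_rules_restrictTerminals.1 hr).2 t hr'
    · exact ih t (List.mem_append_right _ hy)

lemma Derives.restrictTerminals {u v : List (Symbol T g.NT)} (huv : g.Derives u v)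
    (hv : ∀ t, Symbol.terminal t ∈ v → p t) : (g.restrictTerminals p).Derives u v := by
  induction huv using Relation.ReflTransGen.head_induction_on with
  | refl => rfl
  | head hstep hrest ih =>
    obtain ⟨r, hr, hrw⟩ := hstep
    obtain ⟨x, y, -, rfl⟩ := hrw.exists_parts
    have hrp : ∀ t, Symbol.terminal t ∈ r.output → p t := fun t ht =>
      hv t (Derives.terminal_mem hrest (by simp [ht]))
    exact .head ⟨r, mem_rules_restrictTerminals.2 ⟨hr, hrp⟩, hrw⟩ ih

theorem restrictTerminals_language (g : ContextFreeGrammar T) (p : T → Prop) :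
    (g.restrictTerminals p).language = {w | w ∈ g.language ∧ ∀ t ∈ w, p t} := by
  ext w
  simp only [mem_language_iff]
  constructor
  · intro hw
    refine ⟨hw.of_restrictTerminals, fun t ht => ?_⟩
    exact hw.terminals_of_restrictTerminals
      (fun _ ht => nomatch List.mem_singleton.1 ht) t (List.mem_map_of_mem ht)
  · rintro ⟨hw, hwp⟩
    refine hw.restrictTerminals fun t ht => ?_
    obtain ⟨s, hs, hst⟩ := List.mem_map.1 ht
    cases hst
    exact hwp t hs

end ContextFreeGrammar

lemma IsCNF.restrictTerminals {T : Type*} {g : ContextFreeGrammar T} (hg : IsCNF g)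
    (p : T → Prop) : IsCNF (g.restrictTerminals p) :=
  fun r hr => hg r (ContextFreeGrammar.mem_rules_restrictTerminals.1 hr).1

theorem cnf_unary_part_general (α : Type) (h : ℕ)
    (G : ContextFreeGrammar α) (hG : IsCNF G)
    (fG : Fintype G.NT) (hh : @Fintype.card G.NT fG = h) (a : α) :
    ∃ (G' : ContextFreeGrammar α) (fG' : Fintype G'.NT),
      IsCNF G' ∧
      @Fintype.card G'.NT fG' ≤ h ∧
      G'.language = {w | w ∈ G.language ∧ ∀ c ∈ w, c = a} :=
  ⟨G.restrictTerminals (· = a), fG, hG.restrictTerminals _, hh.le,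
    G.restrictTerminals_language _⟩

/-- For every CFG `G` in Chomsky normal form with `h` variables over a
terminal alphabet `α = {a_1, …, a_m}` and every letter `a` of the alphabet, there exists a
CFG in Chomsky normal form with at most `h` variables generating exactly the unary part
`L(G) ∩ {a}^*` of `L(G)`. -/
theorem cnf_unary_part (α : Type) [Fintype α] (m h : ℕ) (hα : Fintype.card α = m)
    (G : ContextFreeGrammar α) (hG : IsCNF G)
    (fG : Fintype G.NT) (hh : @Fintype.card G.NT fG = h) (a : α) :
    ∃ (G' : ContextFreeGrammar α) (fG' : Fintype G'.NT),
      IsCNF G' ∧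
      @Fintype.card G'.NT fG' ≤ h ∧
      G'.language = {w | w ∈ G.language ∧ ∀ c ∈ w, c = a} :=
  cnf_unary_part_general α h G hG fG hh a
end

section
/- Let Σ = {a_1, …, a_m} with m ≥ 2, let g : ℕ^m → Σ* be defined by g(v) = a_1^{v[1]} a_2^{v[2]} ⋯ a_m^{v[m]}, and let f : ℕ^m → Σ* be defined by f(v) = the 1-step left circular shift of g(v) (i.e., if g(v) = c·w with c a letter then f(v) = w·c, and f(v) = ε if g(v) = ε). Then f has the prefix property over the nonunary vectors: for all nonunary vectors u, v ∈ ℕ^m, if f(u) is a prefix of f(v), then u = v. -/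
/-- The word `g(v) = a_1^{v[1]} a_2^{v[2]} ⋯ a_m^{v[m]}` over the alphabet
`{a_1, …, a_m}` (identified with `Fin m`). -/
def gWord {m : ℕ} (v : Fin m → ℕ) : List (Fin m) :=
  (List.finRange m).flatMap fun i => List.replicate (v i) i

/-- The word `f(v)`: the 1-step left circular shift of `g(v)`. -/
def fWord {m : ℕ} (v : Fin m → ℕ) : List (Fin m) :=
  (gWord v).rotate 1

/-- A vector of `ℕ^m` is unary if it has at most one nonzero component
(the null vector is unary). -/
def VecUnary {m : ℕ} (v : Fin m → ℕ) : Prop :=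
  ∀ i j : Fin m, v i ≠ 0 → v j ≠ 0 → i = j

/-!
`g(v)` is a sorted word, so `f(v)` with its last letter removed is the sorted word `tail (g(v))`.
If `f(u)` were a proper prefix of `f(v)` it would therefore be sorted as well; but a word and
its rotation by one letter are both sorted only when all their letters coincide, which means
that `u` is unary. So `f(u) = f(v)`, and `f(v)` determines `v` by counting letters.
-/

namespace List

variable {α : Type*}

theorem dropLast_rotate_one (l : List α) : (l.rotate 1).dropLast = l.tail := by
  cases l with
  | nil => rfl
  | cons a t => rw [rotate_cons_succ, rotate_zero, dropLast_concat, tail_cons]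

theorem IsPrefix.prefix_dropLast {l₁ l₂ : List α} (h : l₁ <+: l₂)
    (hlt : l₁.length < l₂.length) : l₁ <+: l₂.dropLast := by
  rw [dropLast_eq_take, prefix_take_iff]
  exact ⟨h, by omega⟩

theorem Pairwise.eq_of_pairwise_rotate_one [PartialOrder α] {l : List α}
    (h : l.Pairwise (· ≤ ·)) (hrot : (l.rotate 1).Pairwise (· ≤ ·)) {x y : α}
    (hx : x ∈ l) (hy : y ∈ l) : x = y := by
  cases l with
  | nil => simp at hx
  | cons a t =>
    rw [rotate_cons_succ, rotate_zero, pairwise_append] at hrot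
    rw [pairwise_cons] at h
    have eq_head : ∀ z ∈ a :: t, z = a := by
      rintro z (_ | ⟨_, hz⟩)
      · rfl
      · exact le_antisymm (hrot.2.2 z hz a (mem_singleton_self a)) (h.1 z hz)
    rw [eq_head x hx, eq_head y hy]

theorem count_flatMap_replicate [DecidableEq α] (v : α → ℕ) (l : List α) (a : α) :
    (l.flatMap fun i => replicate (v i) i).count a = l.count a * v a := by
  induction l with
  | nil => simp
  | cons b t ih =>
    rw [flatMap_cons, count_append, ih, count_cons, count_replicate]
    by_cases hb : b = a
    · subst hb; simp [Nat.succ_mul, Nat.add_comm]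
    · simp [hb]

end List

open List

section Words

variable {m : ℕ}

theorem count_gWord (v : Fin m → ℕ) (j : Fin m) : (gWord v).count j = v j := by
  rw [gWord, count_flatMap_replicate, count_eq_one_of_mem (nodup_finRange m) (mem_finRange j),
    one_mul]

theorem mem_gWord {v : Fin m → ℕ} {j : Fin m} : j ∈ gWord v ↔ v j ≠ 0 := by
  rw [← count_pos_iff, count_gWord, Nat.pos_iff_ne_zero]

theorem pairwise_le_gWord (v : Fin m → ℕ) : (gWord v).Pairwise (· ≤ ·) := by
  refine pairwise_flatMap.mpr ⟨fun i _ => pairwise_replicate.mpr (Or.inr le_rfl), ?_⟩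
  refine (pairwise_lt_finRange m).imp fun hij x hx y hy => ?_
  rw [eq_of_mem_replicate hx, eq_of_mem_replicate hy]
  exact hij.le

theorem count_fWord (v : Fin m → ℕ) (j : Fin m) : (fWord v).count j = v j := by
  rw [fWord, (rotate_perm _ _).count_eq, count_gWord]

theorem fWord_injective : Function.Injective (fWord (m := m)) := fun u v h =>
  funext fun j => by rw [← count_fWord u j, h, count_fWord]

theorem pairwise_le_dropLast_fWord (v : Fin m → ℕ) : (fWord v).dropLast.Pairwise (· ≤ ·) := by
  rw [fWord, dropLast_rotate_one]
  exact (pairwise_le_gWord v).sublist (tail_sublist _)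

theorem not_pairwise_le_fWord {u : Fin m → ℕ} (hu : ¬ VecUnary u) :
    ¬ (fWord u).Pairwise (· ≤ ·) := fun hsorted =>
  hu fun _ _ hi hj => (pairwise_le_gWord u).eq_of_pairwise_rotate_one hsorted
    (mem_gWord.mpr hi) (mem_gWord.mpr hj)

end Words

theorem fWord_prefix_property_general (m : ℕ) (u v : Fin m → ℕ)
    (hu : ¬ VecUnary u)
    (hpre : fWord u <+: fWord v) : u = v := by
  rcases hpre.length_le.eq_or_lt with hlen | hlen
  · exact fWord_injective (hpre.eq_of_length hlen)
  · exact absurd ((pairwise_le_dropLast_fWord v).sublist (hpre.prefix_dropLast hlen).sublist)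
      (not_pairwise_le_fWord hu)

/-- For `m ≥ 2`, the map `f` has the prefix property over the nonunary
vectors: for all nonunary `u, v ∈ ℕ^m`, if `f(u)` is a prefix of `f(v)` then `u = v`. -/
theorem fWord_prefix_property (m : ℕ) (hm : 2 ≤ m) (u v : Fin m → ℕ)
    (hu : ¬ VecUnary u) (hv : ¬ VecUnary v)
    (hpre : fWord u <+: fWord v) : u = v :=
  fWord_prefix_property_general m u v hu hpre
end

section
/- For every m ≥ 1 there exists a polynomial p such that for every nondeterministic finite automaton A with n states over an alphabet Σ of m letters, the Parikh image ψ(L(A)) can be written as ψ(L(A)) = Y ∪ ⋃_{i ∈ I} Z_i, where: Y ⊆ ℕ^m is a finite set of vectors all of whose components are bounded by p(n); I is a finite index set of cardinality at most p(n); and for each i ∈ I, Z_i is a linear set Z_i = {v_{i,0} + n_1 v_{i,1} + ⋯ + n_{k_i} v_{i,k_i} | n_1, …, n_{k_i} ∈ ℕ} with 0 ≤ k_i ≤ m, all components of the offset v_{i,0} bounded by p(n), and generators v_{i,1}, …, v_{i,k_i} that are linearly independent vectors from {0, 1, …, n}^m. -/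
/-- The Parikh map `ψ : (Fin m)^* → ℕ^m`, counting for each letter its number of
occurrences in the word. -/
def parikh {m : ℕ} (w : List (Fin m)) : Fin m → ℕ := fun i => w.count i

/-- The Parikh image `ψ(L)` of a language over the alphabet `Fin m`. -/
def parikhImage {m : ℕ} (L : Language (Fin m)) : Set (Fin m → ℕ) :=
  parikh '' L

/-- The linear set in `ℕ^m` with offset `v₀` and generators `vs 1, …, vs k`. -/
def linSet {m k : ℕ} (v₀ : Fin m → ℕ) (vs : Fin k → (Fin m → ℕ)) : Set (Fin m → ℕ) :=
  {x | ∃ c : Fin k → ℕ, x = fun i => v₀ i + ∑ j, c j * vs j i}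

/-- Vectors of `ℕ^m` are linearly independent if, over the integers, any vanishing
linear combination has all coefficients zero. -/
def LinIndepZ {m k : ℕ} (vs : Fin k → (Fin m → ℕ)) : Prop :=
  ∀ c : Fin k → ℤ, (∀ i : Fin m, ∑ j, c j * (vs j i : ℤ) = 0) → ∀ j, c j = 0

/-!
An accepting path is shortened, by cutting out cycles of length at most `n` whose removal loses
no visited state, to an accepting path of length `< n²` visiting the same states. Conversely,
cycles can be re-inserted at any visited state, so `ψ(L)` contains `ψ(x₀)` plus the additive
closure of the Parikh vectors of these cycles. The cycle vectors lie in `{0, …, n}^m`; a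
Carathéodory argument, driven by small integer relations from Siegel's lemma, rewrites their
combination as a part with polynomially bounded coefficients, which goes into the offset, plus a
combination of linearly independent cycle vectors. There are polynomially many such linear sets,
and `ψ(L)` is the union of those contained in it.
-/

open Matrix Polynomial

section SmallRelations

section
attribute [local instance] Matrix.seminormedAddCommGroup

theorem Int.Matrix.exists_ne_zero_mulVec_eq_zero_abs_le_of_card_lt {J κ : Type*} [Fintype J]
    [Fintype κ] (B : Matrix J κ ℤ) {N : ℕ} (hB : ∀ j c, |B j c| ≤ N)
    (hcard : Fintype.card J < Fintype.card κ) :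
    ∃ t : κ → ℤ, t ≠ 0 ∧ B *ᵥ t = 0 ∧
      ∀ c, |t c| ≤ (Fintype.card κ * (N + 1) : ℕ) ^ Fintype.card J := by
  classical
  rcases (Fintype.card J).eq_zero_or_pos with hJ | hJ
  · have : IsEmpty J := Fintype.card_eq_zero_iff.1 hJ
    obtain ⟨c₀⟩ : Nonempty κ := Fintype.card_pos_iff.1 (hJ ▸ hcard)
    refine ⟨Pi.single c₀ 1, fun h => by simpa using congrFun h c₀, Subsingleton.elim _ _,
      fun c => ?_⟩
    rw [hJ, pow_zero]
    by_cases hc : c = c₀ <;> simp [hc]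
  obtain ⟨t, ht0, hBt, htB⟩ := Int.Matrix.exists_ne_zero_int_vec_norm_le B hcard hJ
  refine ⟨t, ht0, hBt, fun c => ?_⟩
  set s := Fintype.card κ
  set r := Fintype.card J
  have hs : (1 : ℝ) ≤ s := by exact_mod_cast hJ.trans hcard
  have hbase : max 1 ‖B‖ ≤ (N + 1 : ℝ) := by
    refine max_le (by linarith [N.cast_nonneg (α := ℝ)])
      ((Matrix.norm_le_iff (by positivity)).2 fun j c => ?_)
    rw [Int.norm_eq_abs, ← Int.cast_abs]
    exact (Int.cast_le.2 (hB j c)).trans (by push_cast; linarith)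
  have hsr : (1 : ℝ) ≤ s - r := by
    have : ((r + 1 : ℕ) : ℝ) ≤ s := by exact_mod_cast hcard
    push_cast at this
    linarith
  have key : ((|t c| : ℤ) : ℝ) ≤ ((s * (N + 1) : ℕ) : ℝ) ^ r :=
    calc ((|t c| : ℤ) : ℝ) = ‖t c‖ := by rw [Int.norm_eq_abs, Int.cast_abs]
      _ ≤ ‖t‖ := norm_le_pi_norm t c
      _ ≤ (s * max 1 ‖B‖) ^ ((r : ℝ) / (s - r)) := htB
      _ ≤ (s * (N + 1 : ℝ)) ^ ((r : ℝ) / (s - r)) := by gcongr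
      _ ≤ (s * (N + 1 : ℝ)) ^ (r : ℝ) :=
          Real.rpow_le_rpow_of_exponent_le (one_le_mul_of_one_le_of_one_le hs (by simp))
            (div_le_self r.cast_nonneg hsr)
      _ = ((s * (N + 1) : ℕ) : ℝ) ^ r := by rw [Real.rpow_natCast]; push_cast; ring
  exact_mod_cast key

end

theorem dotProduct_eq_zero_of_mem_span {K n ι : Type*} [CommSemiring K] [Fintype n]
    {w : ι → n → K} {t u : n → K} (hu : u ∈ Submodule.span K (Set.range w))
    (hw : ∀ j, w j ⬝ᵥ t = 0) : u ⬝ᵥ t = 0 := by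
  have : Submodule.span K (Set.range w) ≤ LinearMap.ker ((dotProductBilin K K).flip t) :=
    Submodule.span_le.2 (Set.range_subset_iff.2 hw)
  simpa using this hu

theorem exists_finset_card_lt_of_dotProduct_eq_zero {K ι κ : Type*} [Field K] [Finite ι]
    [Fintype κ] (w : ι → κ → K) {g : κ → K} (hg0 : g ≠ 0) (hg : ∀ i, w i ⬝ᵥ g = 0) :
    ∃ J : Finset ι, J.card < Fintype.card κ ∧
      ∀ t : κ → K, (∀ j ∈ J, w j ⬝ᵥ t = 0) → ∀ i, w i ⬝ᵥ t = 0 := by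
  classical
  obtain ⟨J, a, ha, hspan, hli⟩ := exists_linearIndependent' K w
  have : Finite J := Finite.of_injective a ha
  let _ : Fintype J := Fintype.ofFinite J
  refine ⟨Finset.univ.image a, ?_, fun t ht i => ?_⟩
  · rw [Finset.card_image_of_injective _ ha, Finset.card_univ]
    refine lt_of_le_of_ne (by simpa using hli.fintype_card_le_finrank) fun h => hg0 ?_
    have htop := hli.span_eq_top_of_card_eq_finrank' (by simpa using h)
    funext c
    simpa using dotProduct_eq_zero_of_mem_span (w := w ∘ a) (u := Pi.single c 1)
      (by rw [htop]; trivial) fun j => hg (a j)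
  · exact dotProduct_eq_zero_of_mem_span (hspan ▸ Submodule.subset_span ⟨i, rfl⟩)
      fun j => ht _ (Finset.mem_image_of_mem a (Finset.mem_univ j))

theorem exists_small_relation_of_not_linearIndepOn {κ ι : Type*} [Fintype ι] (v : κ → ι → ℤ)
    (s : Finset κ) {N : ℕ} (hv : ∀ c ∈ s, ∀ i, |v c i| ≤ N) (hdep : ¬ LinearIndepOn ℤ v s) :
    ∃ f : κ → ℤ, (∃ c ∈ s, f c < 0) ∧ ∑ c ∈ s, f c • v c = 0 ∧
      ∀ c, |f c| ≤ (s.card * (N + 1) : ℕ) ^ Fintype.card ι := by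
  classical
  suffices ∃ f : κ → ℤ, (∃ c ∈ s, f c ≠ 0) ∧ ∑ c ∈ s, f c • v c = 0 ∧
      ∀ c, |f c| ≤ (s.card * (N + 1) : ℕ) ^ Fintype.card ι by
    obtain ⟨f, ⟨c, hc, hfc⟩, hf, hle⟩ := this
    rcases hfc.lt_or_gt with h | h
    · exact ⟨f, ⟨c, hc, h⟩, hf, hle⟩
    · refine ⟨-f, ⟨c, hc, by simpa using h⟩, ?_, fun c => by simpa using hle c⟩
      simp only [Pi.neg_apply, neg_smul, Finset.sum_neg_distrib, hf, neg_zero]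
  have sum_smul_apply (f : κ → ℤ) (i : ι) :
      (∑ c ∈ s, f c • v c) i = ∑ c : s, v c i * f c := by
    simp [Finset.sum_apply, ← Finset.sum_coe_sort s, mul_comm]
  set rows : ι → s → ℚ := fun i c => v c i
  have rows_dotProduct (i : ι) (t : s → ℤ) :
      rows i ⬝ᵥ (fun c => (t c : ℚ)) = ((∑ c : s, v c i * t c : ℤ) : ℚ) := by
    simp [rows, dotProduct]
  rw [linearIndepOn_finset_iff] at hdep
  push Not at hdep
  obtain ⟨g, hg, c₀, hc₀, hgc₀⟩ := hdep
  obtain ⟨J, hJ, hker⟩ := exists_finset_card_lt_of_dotProduct_eq_zero rows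
    (g := fun c => (g c : ℚ)) (Function.ne_iff.2 ⟨⟨c₀, hc₀⟩, by simpa using hgc₀⟩)
    fun i => by rw [rows_dotProduct, ← sum_smul_apply, hg, Pi.zero_apply, Int.cast_zero]
  obtain ⟨t, ht0, hBt, htle⟩ := Int.Matrix.exists_ne_zero_mulVec_eq_zero_abs_le_of_card_lt
    (Matrix.of fun (j : J) (c : s) => v c j) (fun j c => hv c c.2 j) (by simpa using hJ)
  have ht (i : ι) : ∑ c : s, v c i * t c = 0 := by
    have := hker (fun c => t c) (fun j hj => by
      rw [rows_dotProduct]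
      exact_mod_cast congrFun hBt ⟨j, hj⟩) i
    rwa [rows_dotProduct, Int.cast_eq_zero] at this
  refine ⟨fun c => if h : c ∈ s then t ⟨c, h⟩ else 0, ?_, funext fun i => ?_, fun c => ?_⟩
  · obtain ⟨c, hc⟩ := Function.ne_iff.1 ht0
    exact ⟨c, c.2, by simpa using hc⟩
  · rw [sum_smul_apply]
    exact (Finset.sum_congr rfl fun c _ => by simp).trans (ht i)
  · have hs : 1 ≤ s.card * (N + 1) :=
      Nat.one_le_iff_ne_zero.2 (by simp [Finset.card_ne_zero_of_mem hc₀])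
    dsimp only
    split_ifs
    · refine (htle _).trans ?_
      simp only [Fintype.card_coe]
      exact_mod_cast Nat.pow_le_pow_right hs (Finset.card_le_univ J)
    · simp

end SmallRelations

section Caratheodory

theorem exists_nonneg_add_mul_and_lt_neg {κ : Type*} (F : Finset κ) (μ : κ → ℕ) (ρ : κ → ℤ)
    (hρ : ∃ c ∈ F, ρ c < 0) :
    ∃ t : ℕ, (∀ c ∈ F, 0 ≤ μ c + t * ρ c) ∧ ∃ c ∈ F, μ c + t * ρ c < -ρ c := by
  classical
  obtain ⟨c₁, hc₁, hρc₁⟩ := hρ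
  have hbad : ∃ t : ℕ, ¬ ∀ c ∈ F, 0 ≤ μ c + t * ρ c :=
    ⟨μ c₁ + 1, fun h => by have := h c₁ hc₁; push_cast at this; nlinarith⟩
  have hpos : 0 < Nat.find hbad := (Nat.find_pos hbad).2 fun h => h fun c _ => by simp
  refine ⟨Nat.find hbad - 1, not_not.1 (Nat.find_min hbad (by omega)), ?_⟩
  obtain ⟨c, hc, hneg⟩ : ∃ c ∈ F, μ c + (Nat.find hbad : ℤ) * ρ c < 0 := by
    simpa using Nat.find_spec hbad
  refine ⟨c, hc, ?_⟩
  rw [show ((Nat.find hbad - 1 : ℕ) : ℤ) = Nat.find hbad - 1 by omega]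
  linarith

def castVec (ι : Type*) : (ι → ℕ) →+ (ι → ℤ) := (Nat.castAddMonoidHom ℤ).compLeft ι

variable {ι : Type*}

@[simp]
theorem castVec_apply (v : ι → ℕ) (i : ι) : castVec ι v i = v i := rfl

theorem castVec_injective : Function.Injective (castVec ι) :=
  fun _ _ h => funext fun i => by simpa using congrFun h i

theorem sum_toNat_add_mul_smul_eq (F : Finset (ι → ℕ)) (μ : (ι → ℕ) → ℕ)
    (ρ : (ι → ℕ) → ℤ) (t : ℕ) (hρ : ∑ c ∈ F, ρ c • castVec ι c = 0)
    (hnonneg : ∀ c ∈ F, 0 ≤ μ c + t * ρ c) :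
    ∑ c ∈ F, ((μ c : ℤ) + t * ρ c).toNat • c = ∑ c ∈ F, μ c • c := by
  apply castVec_injective
  simp only [map_sum, map_nsmul, ← Nat.cast_smul_eq_nsmul ℤ]
  rw [Finset.sum_congr rfl fun c hc => by rw [Int.toNat_of_nonneg (hnonneg c hc)]]
  simp only [add_smul, mul_smul, Finset.sum_add_distrib, ← Finset.smul_sum, hρ, smul_zero,
    add_zero]

/-- If `F` is dependent, move the coefficients along a small relation as far as they stay
nonnegative: one of them drops below the size of the relation, and that vector is set aside. -/
theorem exists_sum_smul_eq_add_sum_smul_linearIndepOn [Fintype ι] [DecidableEq ι] (N : ℕ)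
    (F : Finset (ι → ℕ)) (hF : ∀ c ∈ F, ∀ i, c i ≤ N) (μ : (ι → ℕ) → ℕ) :
    ∃ (μ' ν : (ι → ℕ) → ℕ) (D : Finset (ι → ℕ)), D ⊆ F ∧ LinearIndepOn ℤ (castVec ι) D ∧
      (∀ c, μ' c ≤ (F.card * (N + 1)) ^ Fintype.card ι) ∧
      ∑ c ∈ F, μ c • c = ∑ c ∈ F, μ' c • c + ∑ d ∈ D, ν d • d := by
  induction F using Finset.strongInduction generalizing μ with
  | H F ih =>
  by_cases hind : LinearIndepOn ℤ (castVec ι) F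
  · exact ⟨0, μ, F, subset_rfl, hind, by simp, by simp⟩
  obtain ⟨ρ, hneg, hρ, hρle⟩ := exists_small_relation_of_not_linearIndepOn (castVec ι) F
    (fun c hc i => by simpa using hF c hc i) hind
  obtain ⟨t, hnonneg, c, hc, hlt⟩ := exists_nonneg_add_mul_and_lt_neg F μ ρ hneg
  set μ₁ : (ι → ℕ) → ℕ := fun c => ((μ c : ℤ) + t * ρ c).toNat
  have hμ₁c : μ₁ c ≤ (F.card * (N + 1)) ^ Fintype.card ι := by
    have h₁ := neg_le_abs (ρ c) |>.trans (hρle c)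
    have h₂ := Int.toNat_of_nonneg (hnonneg c hc)
    zify
    push_cast at h₁
    linarith
  obtain ⟨μ', ν, D, hDF, hD, hμ', hsum⟩ := ih (F.erase c) (Finset.erase_ssubset hc)
    (fun c' hc' => hF c' (Finset.mem_of_mem_erase hc')) μ₁
  refine ⟨Function.update μ' c (μ₁ c), ν, D, hDF.trans (Finset.erase_subset c F), hD,
    fun c' => ?_, ?_⟩
  · rcases eq_or_ne c' c with rfl | hne
    · simpa using hμ₁c
    · rw [Function.update_of_ne hne]
      exact (hμ' c').trans (by gcongr; exact Finset.erase_subset c F)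
  · rw [← sum_toNat_add_mul_smul_eq F μ ρ t hρ hnonneg, ← Finset.add_sum_erase F _ hc,
      ← Finset.add_sum_erase F _ hc, hsum, Function.update_self, add_assoc]
    congr 2
    exact Finset.sum_congr rfl fun c' hc' => by
      rw [Function.update_of_ne (Finset.ne_of_mem_erase hc')]

end Caratheodory

namespace NFA.Path

variable {α σ : Type*} {M : NFA α σ}

def append : ∀ {s t u : σ} {x y : List α}, M.Path s t x → M.Path t u y → M.Path s u (x ++ y)
  | _, _, _, _, _, nil _, q => q
  | _, _, _, _, _, cons t s _ a _ h p, q => cons t s _ a _ h (p.append q)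

variable [DecidableEq σ] {r s t u q : σ} {x y c : List α}

theorem start_mem_supp (p : M.Path s t x) : s ∈ p.supp := by
  cases p <;> simp

@[simp]
theorem supp_append (p : M.Path s t x) (p' : M.Path t u y) :
    (p.append p').supp = p.supp ∪ p'.supp := by
  induction p with
  | nil => simp [append, start_mem_supp p']
  | cons _ _ _ _ _ _ p ih => simp [append, ih]

theorem exists_split_of_mem_supp (p : M.Path s t x) (hq : q ∈ p.supp) :
    ∃ x₁ x₂, ∃ (p₁ : M.Path s q x₁) (p₂ : M.Path q t x₂),
      x = x₁ ++ x₂ ∧ p₁.supp ∪ p₂.supp = p.supp := by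
  induction p with
  | nil s =>
    obtain rfl : q = s := by simpa using hq
    exact ⟨[], [], nil q, nil q, rfl, by simp⟩
  | cons t s u a x h p ih =>
    by_cases hqs : q = s
    · subst hqs
      exact ⟨[], a :: x, nil q, cons t q u a x h p, rfl, by simp⟩
    · obtain ⟨x₁, x₂, p₁, p₂, rfl, hsupp⟩ := ih (by simpa [hqs] using hq)
      exact ⟨a :: x₁, x₂, cons t s q a x₁ h p₁, p₂, rfl, by simp [← hsupp]⟩

theorem exists_perm_append_of_mem_supp (p : M.Path s t x) (hq : q ∈ p.supp)
    (pc : M.Path q q c) :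
    ∃ (x' : List α) (p' : M.Path s t x'), p.supp ⊆ p'.supp ∧ x'.Perm (x ++ c) := by
  obtain ⟨x₁, x₂, p₁, p₂, rfl, hsupp⟩ := exists_split_of_mem_supp p hq
  refine ⟨x₁ ++ (c ++ x₂), p₁.append (pc.append p₂), ?_, ?_⟩
  · rw [← hsupp, supp_append, supp_append]
    exact Finset.union_subset_union subset_rfl Finset.subset_union_right
  · simpa using (List.perm_append_comm (l₁ := c) (l₂ := x₂)).append_left x₁

theorem exists_cycle_of_card_supp_le (p : M.Path s t x) (h : p.supp.card ≤ x.length) :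
    ∃ q x₁ c x₂, ∃ (p₁ : M.Path s q x₁) (_ : M.Path q q c) (p₂ : M.Path q t x₂),
      x = x₁ ++ c ++ x₂ ∧ c ≠ [] ∧ c.length ≤ p.supp.card ∧ p₁.supp ∪ p₂.supp ⊆ p.supp := by
  induction p with
  | nil => simp at h
  | cons t s u a x hst p ih =>
    by_cases hp : p.supp.card ≤ x.length
    · obtain ⟨q, x₁, c, x₂, p₁, pc, p₂, rfl, hc, hcl, hsub⟩ := ih hp
      refine ⟨q, a :: x₁, c, x₂, cons t s q a x₁ hst p₁, pc, p₂, rfl, hc,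
        hcl.trans (Finset.card_le_card Finset.subset_union_right), ?_⟩
      simp only [supp, Finset.union_assoc]
      exact Finset.union_subset_union subset_rfl hsub
    · -- `p` visits pairwise distinct states, so the first state of `cons` closes a cycle
      have hs : s ∈ p.supp := by
        by_contra hs
        rw [supp, Finset.singleton_union, Finset.card_insert_of_notMem hs] at h
        simp at h
        omega
      obtain ⟨x₁, x₂, p₁, p₂, rfl, hsupp⟩ := exists_split_of_mem_supp p hs
      refine ⟨s, [], a :: x₁, x₂, nil s, cons t s s a x₁ hst p₁, p₂, rfl, List.cons_ne_nil _ _,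
        ?_, ?_⟩
      · simp only [List.length_append, List.length_cons] at hp ⊢
        exact le_trans (by omega) (Finset.card_le_card Finset.subset_union_right)
      · simp only [supp, ← hsupp]
        exact Finset.union_subset_union subset_rfl Finset.subset_union_right

variable [Fintype σ]

theorem exists_cut_of_card_le_length (u : M.Path r s y) (p : M.Path s t x)
    (hu : u.supp ⊆ p.supp) (hy : Fintype.card σ ≤ y.length) :
    ∃ x' c q, ∃ (p' : M.Path r t x') (_ : M.Path q q c), p'.supp = p.supp ∧ q ∈ p.supp ∧
      c ≠ [] ∧ c.length ≤ Fintype.card σ ∧ (y ++ x).Perm (x' ++ c) := by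
  obtain ⟨q, y₁, c, y₂, u₁, uc, u₂, rfl, hc, hcl, hsub⟩ :=
    exists_cycle_of_card_supp_le u ((Finset.card_le_univ _).trans hy)
  refine ⟨y₁ ++ (y₂ ++ x), c, q, u₁.append (u₂.append p), uc, ?_,
    hu (hsub (Finset.mem_union_right _ (start_mem_supp u₂))), hc,
    hcl.trans (Finset.card_le_univ _), by
      simpa using (List.perm_append_comm (l₁ := c) (l₂ := y₂ ++ x)).append_left y₁⟩
  rw [supp_append, supp_append, ← Finset.union_assoc, Finset.union_eq_right.2 (hsub.trans hu)]

/-- The prefix `u` only visits states that `p` visits again. It grows along `p` until it has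
`n` steps, when it contains a cycle that can be cut out without losing a state; it is reset
after each last visit of a state, which happens at most `|supp p|` times. -/
theorem exists_cut (p : M.Path s t x) (u : M.Path r s y) (hu : u.supp ⊆ p.supp)
    (hlen : Fintype.card σ * p.supp.card ≤ y.length + x.length) :
    ∃ x' c q, ∃ (p' : M.Path r t x') (_ : M.Path q q c), p'.supp = p.supp ∧ q ∈ p.supp ∧
      c ≠ [] ∧ c.length ≤ Fintype.card σ ∧ (y ++ x).Perm (x' ++ c) := by
  induction p generalizing r y with
  | nil s =>
    refine exists_cut_of_card_le_length u _ hu ?_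
    simpa using hlen
  | cons t s v a x hst p ih =>
    rcases le_or_gt (Fintype.card σ) y.length with hy | hy
    · exact exists_cut_of_card_le_length u _ hu hy
    by_cases hs : s ∈ p.supp
    · have hsupp : ({s} ∪ p.supp : Finset σ) = p.supp :=
        Finset.union_eq_right.2 (Finset.singleton_subset_iff.2 hs)
      obtain ⟨x', c, q, p', pc, hp', hq, hc, hcl, hperm⟩ :=
        ih (u.append (cons t s t a [] hst (nil t))) (by
          simp only [supp_append, supp, Finset.union_subset_iff]
          exact ⟨hsupp ▸ hu, Finset.singleton_subset_iff.2 hs,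
            Finset.singleton_subset_iff.2 (start_mem_supp p)⟩)
          (by simp only [supp, hsupp] at hlen; simpa [add_assoc, add_comm 1] using hlen)
      exact ⟨x', c, q, p', pc, by simp [hp', hsupp], by simpa [hsupp] using hq, hc, hcl,
        by simpa using hperm⟩
    · rw [supp, Finset.singleton_union, Finset.card_insert_of_notMem hs] at hlen
      obtain ⟨x', c, q, p', pc, hp', hq, hc, hcl, hperm⟩ :=
        ih (nil t) (by simpa using start_mem_supp p)
          (by simp only [List.length_nil, zero_add]; simp at hlen; nlinarith)
      refine ⟨y ++ a :: x', c, q, u.append (cons t s v a x' hst p'), pc, ?_,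
        by simp [hq], hc, hcl, ?_⟩
      · rw [supp_append, supp, hp']
        exact Finset.union_eq_right.2 hu
      · simpa using (hperm.cons a).append_left y

theorem exists_short_path_perm_append_cycles (p : M.Path s t x) :
    ∃ (x₀ : List α) (cs : List (List α)) (p₀ : M.Path s t x₀), p₀.supp = p.supp ∧
      x₀.length < Fintype.card σ * Fintype.card σ ∧
      (∀ c ∈ cs, c.length ≤ Fintype.card σ ∧ ∃ q ∈ p.supp, Nonempty (M.Path q q c)) ∧
      x.Perm (x₀ ++ cs.flatten) := by
  induction hx : x.length using Nat.strong_induction_on generalizing x with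
  | _ L ih =>
  by_cases hshort : x.length < Fintype.card σ * Fintype.card σ
  · exact ⟨x, [], p, rfl, hshort, by simp, by simp⟩
  obtain ⟨x', c, q, p', pc, hp', hq, hc, hcl, hperm⟩ := exists_cut p (nil s)
    (by simpa using start_mem_supp p)
    (by simpa using (Nat.mul_le_mul_left _ (Finset.card_le_univ _)).trans (not_lt.1 hshort))
  have hlt : x'.length < L := by
    rw [← hx, (by simpa using hperm.length_eq : x.length = x'.length + c.length)]
    exact Nat.lt_add_of_pos_right (List.length_pos_iff.2 hc)
  obtain ⟨x₀, cs, p₀, hp₀, hlen, hcs, hperm₀⟩ := ih _ hlt p' rfl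
  refine ⟨x₀, c :: cs, p₀, hp₀.trans hp', hlen, ?_, ?_⟩
  · rintro c' (_ | ⟨_, hc'⟩)
    · exact ⟨hcl, q, hq, ⟨pc⟩⟩
    · simpa [hp'] using hcs c' hc'
  · refine (by simpa using hperm : x.Perm (x' ++ c)).trans ?_
    simpa using (hperm₀.append_right c).trans
      (by simpa using (List.perm_append_comm (l₁ := cs.flatten)).append_left x₀)

end NFA.Path

section Parikh

variable {m : ℕ}

theorem parikh_append (x y : List (Fin m)) : parikh (x ++ y) = parikh x + parikh y :=
  funext fun _ => List.count_append ..

theorem parikh_flatten (L : List (List (Fin m))) : parikh L.flatten = (L.map parikh).sum := by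
  induction L with
  | nil => rfl
  | cons x L ih => simp [parikh_append, ih]

theorem List.Perm.parikh_eq {x y : List (Fin m)} (h : x.Perm y) : parikh x = parikh y :=
  funext h.count_eq

theorem parikh_le_length (x : List (Fin m)) (i : Fin m) : parikh x i ≤ x.length :=
  List.count_le_length

theorem mem_linSet_iff {k : ℕ} {v₀ z : Fin m → ℕ} {vs : Fin k → Fin m → ℕ} :
    z ∈ linSet v₀ vs ↔ ∃ c : Fin k → ℕ, z = v₀ + ∑ j, c j • vs j := by
  simp [linSet, funext_iff, Finset.sum_apply]

theorem linIndepZ_iff {k : ℕ} {vs : Fin k → Fin m → ℕ} :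
    LinIndepZ vs ↔ LinearIndependent ℤ (castVec (Fin m) ∘ vs) := by
  simp [LinIndepZ, Fintype.linearIndependent_iff, funext_iff, Finset.sum_apply]

theorem LinIndepZ.le {k : ℕ} {vs : Fin k → Fin m → ℕ} (h : LinIndepZ vs) : k ≤ m := by
  simpa using (linIndepZ_iff.1 h).fintype_card_le_finrank

theorem exists_linIndepZ_enum_of_linearIndepOn (D : Finset (Fin m → ℕ))
    (hD : LinearIndepOn ℤ (castVec (Fin m)) D) :
    ∃ (k : ℕ) (vs : Fin k → Fin m → ℕ), (∀ j, vs j ∈ D) ∧ LinIndepZ vs ∧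
      ∀ ν : (Fin m → ℕ) → ℕ, ∑ d ∈ D, ν d • d = ∑ j, ν (vs j) • vs j := by
  refine ⟨D.card, fun j => D.equivFin.symm j, fun j => (D.equivFin.symm j).2,
    linIndepZ_iff.2 (hD.comp _ D.equivFin.symm.injective), fun ν => ?_⟩
  rw [← Finset.sum_coe_sort, ← D.equivFin.symm.sum_comp]

theorem Finset.card_le_succ_pow_of_forall_apply_le {n : ℕ} {F : Finset (Fin m → ℕ)}
    (hF : ∀ v ∈ F, ∀ i, v i ≤ n) : F.card ≤ (n + 1) ^ m := by
  simpa using Finset.card_le_card (t := Fintype.piFinset fun _ : Fin m => Finset.range (n + 1))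
    fun v hv => Fintype.mem_piFinset.2 fun i => Finset.mem_range.2 (Nat.lt_succ_of_le (hF v hv i))

noncomputable def offsetPoly (m : ℕ) : ℕ[X] :=
  X ^ 2 + (X + 1) ^ m * (((X + 1) ^ m * (X + 1)) ^ m * X)

theorem parikh_add_sum_smul_le_offsetPoly {n : ℕ} {x₀ : List (Fin m)} {F : Finset (Fin m → ℕ)}
    {μ : (Fin m → ℕ) → ℕ} (hx₀ : x₀.length < n * n) (hF : ∀ v ∈ F, ∀ i, v i ≤ n)
    (hμ : ∀ v, μ v ≤ (F.card * (n + 1)) ^ m) (j : Fin m) :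
    (parikh x₀ + ∑ v ∈ F, μ v • v) j ≤ (offsetPoly m).eval n :=
  calc (parikh x₀ + ∑ v ∈ F, μ v • v) j = parikh x₀ j + ∑ v ∈ F, μ v * v j := by
        simp [Finset.sum_apply]
    _ ≤ n ^ 2 + ∑ v ∈ F, ((n + 1) ^ m * (n + 1)) ^ m * n := by
        gcongr with v hv
        · exact (parikh_le_length x₀ j).trans (by nlinarith)
        · exact (hμ v).trans (by gcongr; exact Finset.card_le_succ_pow_of_forall_apply_le hF)
        · exact hF v hv j
    _ ≤ (offsetPoly m).eval n := by
        rw [Finset.sum_const, smul_eq_mul]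
        simp only [offsetPoly, eval_add, eval_mul, eval_pow, eval_X, eval_one]
        gcongr
        exact Finset.card_le_succ_pow_of_forall_apply_le hF

end Parikh

namespace NFA

variable {m : ℕ} {σ : Type*}

def cycleParikh (A : NFA (Fin m) σ) (T : Finset σ) : Set (Fin m → ℕ) :=
  {v | ∃ q ∈ T, ∃ c, Nonempty (A.Path q q c) ∧ parikh c = v}

theorem Path.exists_parikh_eq_add_of_mem_closure [DecidableEq σ] {A : NFA (Fin m) σ}
    {T : Finset σ} {v : Fin m → ℕ} (hv : v ∈ AddSubmonoid.closure (A.cycleParikh T)) {s t : σ}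
    {x : List (Fin m)} (p : A.Path s t x) (hT : T ⊆ p.supp) :
    ∃ (x' : List (Fin m)) (p' : A.Path s t x'), T ⊆ p'.supp ∧ parikh x' = parikh x + v := by
  induction hv using AddSubmonoid.closure_induction generalizing x with
  | mem v hv =>
    obtain ⟨q, hq, c, ⟨pc⟩, rfl⟩ := hv
    obtain ⟨x', p', hsub, hperm⟩ := p.exists_perm_append_of_mem_supp (hT hq) pc
    exact ⟨x', p', hT.trans hsub, by rw [hperm.parikh_eq, parikh_append]⟩
  | zero => exact ⟨x, p, hT, by simp⟩
  | add v w _ _ ihv ihw =>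
    obtain ⟨x₁, p₁, hT₁, h₁⟩ := ihv p hT
    obtain ⟨x₂, p₂, hT₂, h₂⟩ := ihw p₁ hT₁
    exact ⟨x₂, p₂, hT₂, by rw [h₂, h₁, add_assoc]⟩

theorem exists_linSet_of_mem_accepts [Fintype σ] (A : NFA (Fin m) σ) {x : List (Fin m)}
    (hx : x ∈ A.accepts) :
    ∃ (v₀ : Fin m → ℕ) (k : ℕ) (vs : Fin k → Fin m → ℕ),
      (∀ j, v₀ j ≤ (offsetPoly m).eval (Fintype.card σ)) ∧ (∀ a b, vs a b ≤ Fintype.card σ) ∧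
      LinIndepZ vs ∧ parikh x ∈ linSet v₀ vs ∧ linSet v₀ vs ⊆ parikhImage A.accepts := by
  classical
  set n := Fintype.card σ
  obtain ⟨s, hs, t, ht, ⟨p⟩⟩ := A.accepts_iff_exists_path.1 hx
  obtain ⟨x₀, cs, p₀, hp₀, hlen, hcs, hperm⟩ := p.exists_short_path_perm_append_cycles
  set F := (cs.map parikh).toFinset
  have hF : ∀ v ∈ F, v ∈ A.cycleParikh p₀.supp ∧ ∀ i, v i ≤ n := by
    intro v hv
    obtain ⟨c, hc, rfl⟩ := List.mem_map.1 (List.mem_toFinset.1 hv)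
    obtain ⟨hcl, q, hq, hpc⟩ := hcs c hc
    exact ⟨⟨q, hp₀ ▸ hq, c, hpc, rfl⟩, fun i => (parikh_le_length c i).trans hcl⟩
  obtain ⟨μ', ν, D, hDF, hD, hμ', hsum⟩ := exists_sum_smul_eq_add_sum_smul_linearIndepOn n F
    (fun v hv => (hF v hv).2) fun v => (cs.map parikh).count v
  obtain ⟨k, vs, hvsD, hvs, hνvs⟩ := exists_linIndepZ_enum_of_linearIndepOn D hD
  refine ⟨parikh x₀ + ∑ v ∈ F, μ' v • v, k, vs,
    parikh_add_sum_smul_le_offsetPoly hlen (fun v hv => (hF v hv).2) (by simpa using hμ'),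
    fun a b => (hF _ (hDF (hvsD a))).2 b, hvs, mem_linSet_iff.2 ⟨fun j => ν (vs j), ?_⟩,
    fun z hz => ?_⟩
  · rw [hperm.parikh_eq, parikh_append, parikh_flatten, Finset.sum_list_count, hsum, hνvs,
      add_assoc]
  · obtain ⟨c, rfl⟩ := mem_linSet_iff.1 hz
    have hmem : ∑ v ∈ F, μ' v • v + ∑ j, c j • vs j ∈
        AddSubmonoid.closure (A.cycleParikh p₀.supp) :=
      add_mem (sum_mem fun v hv => nsmul_mem (AddSubmonoid.subset_closure (hF v hv).1) _)
        (sum_mem fun j _ => nsmul_mem (AddSubmonoid.subset_closure (hF _ (hDF (hvsD j))).1) _)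
    obtain ⟨x', p', -, hx'⟩ := p₀.exists_parikh_eq_add_of_mem_closure hmem subset_rfl
    exact ⟨x', A.accepts_iff_exists_path.2 ⟨s, hs, t, ht, ⟨p'⟩⟩, by rw [hx', add_assoc]⟩

end NFA

def boundedLinSetData (m P n : ℕ) : Finset ((Fin m → ℕ) × Σ k, Fin k → Fin m → ℕ) :=
  Fintype.piFinset (fun _ => Finset.range (P + 1)) ×ˢ
    (Finset.range (m + 1)).sigma fun k =>
      Fintype.piFinset fun _ : Fin k => Fintype.piFinset fun _ : Fin m => Finset.range (n + 1)

theorem mem_boundedLinSetData {m P n : ℕ} {d : (Fin m → ℕ) × Σ k, Fin k → Fin m → ℕ} :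
    d ∈ boundedLinSetData m P n ↔ (∀ j, d.1 j ≤ P) ∧ d.2.1 ≤ m ∧ ∀ a b, d.2.2 a b ≤ n := by
  simp [boundedLinSetData]

theorem card_boundedLinSetData_le (m P n : ℕ) :
    (boundedLinSetData m P n).card ≤ (P + 1) ^ m * ((m + 1) * (n + 1) ^ (m * m)) := by
  rw [boundedLinSetData, Finset.card_product, Finset.card_sigma]
  gcongr
  · simp
  · calc _ ≤ ∑ _k ∈ Finset.range (m + 1), (n + 1) ^ (m * m) :=
          Finset.sum_le_sum fun k hk => by
            simp only [Fintype.card_piFinset, Finset.card_range, Finset.prod_const,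
              Finset.card_univ, Fintype.card_fin, ← pow_mul]
            exact Nat.pow_le_pow_right (by omega)
              (Nat.mul_le_mul_left _ (by simpa [Nat.lt_succ_iff] using hk))
      _ = _ := by simp

theorem NFA.parikhImage_eq_biUnion {m : ℕ} {σ : Type*} [Fintype σ] (A : NFA (Fin m) σ)
    (G : Finset ((Fin m → ℕ) × Σ k, Fin k → Fin m → ℕ))
    (hG : ∀ d, d ∈ G ↔ d ∈ boundedLinSetData m ((offsetPoly m).eval (Fintype.card σ))
      (Fintype.card σ) ∧ LinIndepZ d.2.2 ∧ linSet d.1 d.2.2 ⊆ parikhImage A.accepts) :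
    parikhImage A.accepts = ⋃ d ∈ G, linSet d.1 d.2.2 := by
  ext z
  simp only [Set.mem_iUnion, exists_prop]
  constructor
  · rintro ⟨x, hx, rfl⟩
    obtain ⟨v₀, k, vs, hv₀, hvs, hli, hx, hsub⟩ := A.exists_linSet_of_mem_accepts hx
    exact ⟨(v₀, ⟨k, vs⟩), (hG _).2 ⟨mem_boundedLinSetData.2 ⟨hv₀, hli.le, hvs⟩, hli, hsub⟩, hx⟩
  · rintro ⟨d, hd, hz⟩
    exact ((hG d).1 hd).2.2 hz

theorem Finset.exists_biUnion_range_card_eq {α β : Type*} [Nonempty β] (G : Finset β) :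
    ∃ f : ℕ → β, (∀ i ∈ Finset.range G.card, f i ∈ G) ∧
      ∀ g : β → Set α, ⋃ i ∈ Finset.range G.card, g (f i) = ⋃ d ∈ G, g d := by
  classical
  set f : ℕ → β := fun i =>
    if h : i < G.card then G.equivFin.symm ⟨i, h⟩ else Classical.arbitrary β
  have hf : (Finset.range G.card).image f = G := by
    ext d
    simp only [Finset.mem_image, Finset.mem_range]
    constructor
    · rintro ⟨i, hi, rfl⟩
      simp [f, hi]
    · exact fun hd => ⟨G.equivFin ⟨d, hd⟩, (G.equivFin _).2, by simp [f]⟩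
  refine ⟨f, fun i hi => hf ▸ Finset.mem_image_of_mem f hi, fun g => ?_⟩
  conv_rhs => rw [← hf, Finset.set_biUnion_finset_image]

theorem nfa_parikh_semilinear_representation_general (m : ℕ) :
    ∃ p : Polynomial ℕ,
      ∀ (σ : Type) [Fintype σ], ∀ n : ℕ, Fintype.card σ = n →
      ∀ A : NFA (Fin m) σ,
      ∃ (Y : Set (Fin m → ℕ)) (I : Finset ℕ) (k : ℕ → ℕ)
        (v₀ : ℕ → (Fin m → ℕ)) (vs : (i : ℕ) → Fin (k i) → (Fin m → ℕ)),
        Y.Finite ∧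
        (∀ y ∈ Y, ∀ j, y j ≤ p.eval n) ∧
        I.card ≤ p.eval n ∧
        (∀ i ∈ I,
          k i ≤ m ∧
          (∀ j, v₀ i j ≤ p.eval n) ∧
          (∀ a b, vs i a b ≤ n) ∧
          LinIndepZ (vs i)) ∧
        parikhImage A.accepts = Y ∪ ⋃ i ∈ I, linSet (v₀ i) (vs i) := by
  refine ⟨offsetPoly m + (offsetPoly m + 1) ^ m * (C (m + 1) * (X + 1) ^ (m * m)), ?_⟩
  rintro σ _ n rfl A
  classical
  set G := (boundedLinSetData m ((offsetPoly m).eval (Fintype.card σ)) (Fintype.card σ)).filter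
    fun d => LinIndepZ d.2.2 ∧ linSet d.1 d.2.2 ⊆ parikhImage A.accepts
  obtain ⟨f, hfG, hunion⟩ := G.exists_biUnion_range_card_eq (α := Fin m → ℕ)
  refine ⟨∅, Finset.range G.card, fun i => (f i).2.1, fun i => (f i).1, fun i => (f i).2.2,
    Set.finite_empty, by simp, ?_, fun i hi => ?_, ?_⟩
  · rw [Finset.card_range]
    refine ((Finset.card_filter_le _ _).trans (card_boundedLinSetData_le _ _ _)).trans ?_
    simp
  · obtain ⟨hd, hli, -⟩ := Finset.mem_filter.1 (hfG i hi)
    obtain ⟨hv₀, hk, hvs⟩ := mem_boundedLinSetData.1 hd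
    exact ⟨hk, fun j => (hv₀ j).trans (by simp), hvs, hli⟩
  · rw [Set.empty_union, hunion fun d => linSet d.1 d.2.2]
    exact A.parikhImage_eq_biUnion G fun d => Finset.mem_filter

/-- For every `m ≥ 1` there is a polynomial `p` such that for every
`n`-state NFA `A` over an alphabet of `m` letters, the Parikh image `ψ(L(A))` can be
written as `Y ∪ ⋃_{i ∈ I} Z_i` where `Y` is a finite set of vectors with components
bounded by `p(n)`, `|I| ≤ p(n)`, and each `Z_i` is a linear set with at most `m`
generators which are linearly independent vectors from `{0,…,n}^m`, and whose
offset has components bounded by `p(n)`. -/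
theorem nfa_parikh_semilinear_representation (m : ℕ) (hm : 1 ≤ m) :
    ∃ p : Polynomial ℕ,
      ∀ (σ : Type) [Fintype σ], ∀ n : ℕ, Fintype.card σ = n →
      ∀ A : NFA (Fin m) σ,
      ∃ (Y : Set (Fin m → ℕ)) (I : Finset ℕ) (k : ℕ → ℕ)
        (v₀ : ℕ → (Fin m → ℕ)) (vs : (i : ℕ) → Fin (k i) → (Fin m → ℕ)),
        Y.Finite ∧
        (∀ y ∈ Y, ∀ j, y j ≤ p.eval n) ∧
        I.card ≤ p.eval n ∧
        (∀ i ∈ I,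
          k i ≤ m ∧
          (∀ j, v₀ i j ≤ p.eval n) ∧
          (∀ a b, vs i a b ≤ n) ∧
          LinIndepZ (vs i)) ∧
        parikhImage A.accepts = Y ∪ ⋃ i ∈ I, linSet (v₀ i) (vs i) :=
  nfa_parikh_semilinear_representation_general m
end

section
/- There exists a constant c > 0 such that for infinitely many n there is a nondeterministic finite automaton with n states over a one-letter alphabet such that every deterministic finite automaton accepting a language Parikh equivalent to its language has at least e^{c·√(n·ln n)} states; consequently, the upper bound e^{O(√(n·ln n))} for converting n-state NFAs into Parikh equivalent DFAs is tight. -/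
open Filter Finset Real Chebyshev

theorem parikh_fin_one_injective : Function.Injective (parikh (m := 1)) := fun w w' h => by
  have hlen (v : List (Fin 1)) : v.count 0 = v.length :=
    List.count_eq_length.2 fun _ _ => Subsingleton.elim _ _
  exact List.length_injective (by simpa only [parikh, hlen] using congrFun h 0)

theorem parikhImage_fin_one_injective : Function.Injective (parikhImage (m := 1)) :=
  Set.image_injective.2 parikh_fin_one_injective

theorem DFA.le_card_of_mem_accepts_replicate_iff {α σ : Type*} [Fintype σ] (B : DFA α σ)
    (a : α) {d : ℕ} (h : ∀ m, List.replicate m a ∈ B.accepts ↔ ¬ d ∣ m) :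
    d ≤ Fintype.card σ := by
  by_contra! hlt
  obtain ⟨i, j, hij, hstate⟩ := Fintype.exists_ne_map_eq_of_card_lt
    (fun k : Fin (Fintype.card σ + 1) => B.eval (List.replicate k a)) (by simp)
  wlog hij_lt : i < j generalizing i j
  · exact this j i hij.symm hstate.symm (lt_of_le_of_ne (not_lt.1 hij_lt) hij.symm)
  have shift (k : ℕ) :
      B.eval (List.replicate (i + k) a) = B.eval (List.replicate (j + k) a) := by
    simp only [DFA.eval, List.replicate_add, DFA.evalFrom_of_append]
    exact congrArg (B.evalFrom · _) hstate
  obtain ⟨M, hdM, hiM⟩ : ∃ M, d ∣ M ∧ (i : ℕ) ≤ M :=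
    ⟨d * i, dvd_mul_right _ _, Nat.le_mul_of_pos_left _ (by omega)⟩
  have hrej : List.replicate M a ∉ B.accepts := by rw [h]; exact not_not.2 hdM
  have hacc : List.replicate (M + (j - i)) a ∈ B.accepts := by
    rw [h, Nat.dvd_add_right hdM]
    exact Nat.not_dvd_of_pos_of_lt (by omega) (by omega)
  rw [DFA.mem_accepts] at hrej hacc
  rw [show M = i + (M - i) by omega, shift, show (j : ℕ) + (M - i) = M + (j - i) by omega] at hrej
  exact hrej hacc

def cyclesNFA (α : Type*) (S : Finset ℕ) : NFA α (Σ p : S, Fin p) where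
  step s _ := {⟨s.1, ⟨(s.2 + 1) % s.1, Nat.mod_lt _ s.2.pos⟩⟩}
  start := {s | (s.2 : ℕ) = 0}
  accept := {s | (s.2 : ℕ) ≠ 0}

theorem card_cyclesNFA_states (S : Finset ℕ) :
    Fintype.card (Σ p : S, Fin p) = ∑ p ∈ S, p := by
  simpa [Fintype.card_sigma] using Finset.sum_attach S id

theorem mem_eval_cyclesNFA {α : Type*} {S : Finset ℕ} (w : List α) (s : Σ p : S, Fin p) :
    s ∈ (cyclesNFA α S).eval w ↔ (s.2 : ℕ) = w.length % s.1 := by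
  induction w using List.reverseRecOn generalizing s with
  | nil => simp [NFA.eval, cyclesNFA]
  | append_singleton w a ih =>
    rw [NFA.eval_append_singleton, NFA.mem_stepSet]
    simp only [ih]
    simp only [cyclesNFA, Set.mem_singleton_iff, List.length_append, List.length_singleton]
    constructor
    · rintro ⟨⟨q, j⟩, hj : (j : ℕ) = w.length % q, rfl⟩
      simp only [hj, Nat.mod_add_mod]
    · obtain ⟨p, i⟩ := s
      intro hi
      refine ⟨⟨p, ⟨w.length % p, Nat.mod_lt _ i.pos⟩⟩, rfl, ?_⟩
      congr
      exact Fin.ext (hi.trans (Nat.mod_add_mod ..).symm)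

theorem mem_accepts_cyclesNFA {α : Type*} {S : Finset ℕ} (hS : 0 ∉ S) (w : List α) :
    w ∈ (cyclesNFA α S).accepts ↔ ¬ S.lcm id ∣ w.length := by
  change (∃ s ∈ (cyclesNFA α S).accept, s ∈ (cyclesNFA α S).eval w) ↔ _
  simp only [mem_eval_cyclesNFA, Finset.lcm_dvd_iff, id, not_forall]
  constructor
  · rintro ⟨⟨⟨p, hp⟩, i⟩, hi : (i : ℕ) ≠ 0, hiw⟩
    exact ⟨p, hp, fun hdvd => hi (hiw.trans (Nat.mod_eq_zero_of_dvd hdvd))⟩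
  · rintro ⟨p, hp, hdvd⟩
    have hp0 : 0 < p := Nat.pos_of_ne_zero (ne_of_mem_of_not_mem hp hS)
    exact ⟨⟨⟨p, hp⟩, ⟨w.length % p, Nat.mod_lt _ hp0⟩⟩, mt Nat.dvd_of_mod_eq_zero hdvd, rfl⟩

theorem Nat.lcm_primesLE (x : ℕ) : (primesLE x).lcm id = primorial x := by
  rw [Finset.lcm_eq_prod]
  · rfl
  · intro p hp q hq hpq
    exact (coprime_primes (prime_of_mem_primesLE hp) (prime_of_mem_primesLE hq)).2 hpq

theorem Nat.primeCounting_le_self (x : ℕ) : primeCounting x ≤ x := by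
  rw [← primesLE_card_eq_primeCounting, primesLE_eq_filter_Icc_one]
  exact (card_filter_le _ _).trans (by simp)

theorem Nat.sum_primesLE_le_mul_primeCounting (x : ℕ) :
    ∑ p ∈ primesLE x, p ≤ x * primeCounting x := by
  rw [← primesLE_card_eq_primeCounting, mul_comm, ← smul_eq_mul]
  exact sum_le_card_nsmul _ _ _ fun p hp => le_of_mem_primesLE hp

theorem Nat.tendsto_sum_primesLE : Tendsto (fun x => ∑ p ∈ primesLE x, p) atTop atTop := by
  refine tendsto_atTop_mono (fun x => ?_) tendsto_primeCounting
  rw [← primesLE_card_eq_primeCounting, card_eq_sum_ones]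
  exact sum_le_sum fun p hp => (prime_of_mem_primesLE hp).one_le

theorem primeCounting_mul_log_le {x : ℕ} (hx : 2 ≤ x) :
    (Nat.primeCounting x) * log x ≤ 8 * x := by
  have hx1 : (1 : ℝ) < x := by exact_mod_cast hx
  have hls : 0 < log √x := log_pos (lt_sqrt_of_sq_lt (by simpa using hx1))
  have hπ : Nat.primeCounting x * log √x ≤ log 4 * x + √x * log √x := by
    have := mul_le_mul_of_nonneg_right (pi_le_log4_mul_div hx1) hls.le
    rwa [Nat.floor_natCast, add_mul, div_mul_cancel₀ _ hls.ne'] at this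
  have hlog : log x = 2 * log √x := by rw [log_sqrt (by positivity)]; ring
  have hls_le : log √x ≤ √x := (log_le_sub_one_of_pos (by positivity)).trans (by linarith)
  have h4 : log 4 ≤ 3 := by linarith [log_le_sub_one_of_pos (show (0 : ℝ) < 4 by norm_num)]
  have hss := mul_self_sqrt (Nat.cast_nonneg (α := ℝ) x)
  rw [hlog]
  nlinarith [sqrt_nonneg (x : ℝ)]

theorem sum_primesLE_mul_log_le {x : ℕ} (hx : 2 ≤ x) :
    (∑ p ∈ Nat.primesLE x, p : ℕ) * log (∑ p ∈ Nat.primesLE x, p : ℕ) ≤ 16 * (x : ℝ) ^ 2 := by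
  set n := ∑ p ∈ Nat.primesLE x, p
  have hn : n ≤ x * Nat.primeCounting x := Nat.sum_primesLE_le_mul_primeCounting x
  have hn0 : 0 < n := Nat.lt_of_lt_of_le two_pos <| single_le_sum (f := fun p => p)
    (fun _ _ => Nat.zero_le _) (Nat.mem_primesLE.2 ⟨hx, Nat.prime_two⟩)
  have hlog : log n ≤ 2 * log x := calc
    log n ≤ log ((x : ℝ) ^ 2) := log_le_log (by positivity) <| by
      exact_mod_cast hn.trans (by nlinarith [Nat.primeCounting_le_self x])
    _ = 2 * log x := by rw [log_pow]; norm_num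
  have hnR : (n : ℝ) ≤ x * Nat.primeCounting x := by exact_mod_cast hn
  have hπ := primeCounting_mul_log_le hx
  have hlogn0 : 0 ≤ log (n : ℝ) := log_natCast_nonneg n
  have hlogx0 : 0 ≤ log (x : ℝ) := log_natCast_nonneg x
  nlinarith

theorem eventually_log_natCast_le_mul_sqrt {ε : ℝ} (hε : 0 < ε) :
    ∀ᶠ x : ℕ in atTop, log x ≤ ε * √x := by
  have h := (isLittleO_log_rpow_atTop (by norm_num : (0 : ℝ) < 1 / 2)).bound hε
  filter_upwards [tendsto_natCast_atTop_atTop.eventually h] with x hx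
  rw [← sqrt_eq_rpow, norm_of_nonneg (sqrt_nonneg _)] at hx
  exact (le_norm_self _).trans hx

theorem eventually_div_four_le_theta : ∀ᶠ x : ℕ in atTop, (x : ℝ) / 4 ≤ θ x := by
  filter_upwards [eventually_log_natCast_le_mul_sqrt (ε := 1 / 10) (by norm_num),
    eventually_ge_atTop 2] with x hlog hx
  have hx2 : (2 : ℝ) ≤ x := by exact_mod_cast hx
  have hlog1 : log (x + 1) ≤ 2 * log x := calc
    log (x + 1) ≤ log ((x : ℝ) ^ 2) := log_le_log (by positivity) (by nlinarith)
    _ = 2 * log x := by rw [log_pow]; norm_num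
  have hsqrt : 1 ≤ √(x : ℝ) := one_le_sqrt.2 (by linarith)
  have hlog0 : 0 ≤ log (x : ℝ) := log_nonneg (by linarith)
  have hss := mul_self_sqrt (Nat.cast_nonneg (α := ℝ) x)
  nlinarith [theta_ge x, log_two_gt_d9]

theorem eventually_sqrt_sum_primesLE_mul_log_le_theta :
    ∀ᶠ x : ℕ in atTop,
      √((∑ p ∈ Nat.primesLE x, p : ℕ) * log (∑ p ∈ Nat.primesLE x, p : ℕ)) / 16 ≤ θ x := by
  filter_upwards [eventually_div_four_le_theta, eventually_ge_atTop 2] with x hθ hx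
  have hsqrt := sqrt_le_sqrt (sum_primesLE_mul_log_le hx)
  rw [show (16 : ℝ) * x ^ 2 = (4 * x) ^ 2 by ring, sqrt_sq (by positivity)] at hsqrt
  linarith

/-- There is a constant `c > 0` such that for infinitely many `n` there
is an `n`-state NFA over a one-letter alphabet such that every DFA accepting a language
Parikh equivalent to its language has at least `e^{c·√(n·ln n)}` states; hence the
`e^{O(√(n·ln n))}` upper bound for converting NFAs into Parikh equivalent DFAs is tight. -/
theorem nfa_to_parikh_equivalent_dfa_lower_bound :
    ∃ c : ℝ, 0 < c ∧
      ∀ N : ℕ, ∃ n : ℕ, N ≤ n ∧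
        ∃ (σ : Type) (_ : Fintype σ), Fintype.card σ = n ∧
          ∃ A : NFA (Fin 1) σ,
            ∀ (σ' : Type) (_ : Fintype σ') (B : DFA (Fin 1) σ'),
              parikhImage B.accepts = parikhImage A.accepts →
              Real.exp (c * Real.sqrt (n * Real.log n)) ≤ (Fintype.card σ' : ℝ) := by
  refine ⟨1 / 16, by norm_num, fun N => ?_⟩
  obtain ⟨x, hN, hθ⟩ := ((Nat.tendsto_sum_primesLE.eventually_ge_atTop N).and
    eventually_sqrt_sum_primesLE_mul_log_le_theta).exists
  refine ⟨_, hN, _, inferInstance, card_cyclesNFA_states _, cyclesNFA (Fin 1) (Nat.primesLE x),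
    fun σ' _ B hB => ?_⟩
  have hacc (m : ℕ) : List.replicate m 0 ∈ B.accepts ↔ ¬ primorial x ∣ m := by
    rw [parikhImage_fin_one_injective hB, mem_accepts_cyclesNFA (mt Nat.prime_of_mem_primesLE
      Nat.not_prime_zero), Nat.lcm_primesLE, List.length_replicate]
  calc _ ≤ exp (θ x) := exp_le_exp.2 (by linarith)
    _ = primorial x := by
      rw [theta_eq_log_primorial, Nat.floor_natCast, exp_log (mod_cast primorial_pos x)]
    _ ≤ Fintype.card σ' := mod_cast B.le_card_of_mem_accepts_replicate_iff 0 hacc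
end

section
/- Let H ≥ 1 and consider the singleton language {(ab)^H} over the two-letter alphabet {a, b}, consisting of the single word of H consecutive copies of ab. Then every nondeterministic finite automaton (in particular, every deterministic finite automaton) accepting a language Parikh equivalent to {(ab)^H} has at least 2H+1 states. -/
/-- The word `(ab)^H` over the two-letter alphabet `{a, b}` (identified with `Fin 2`,
with `a = 0` and `b = 1`): `H` consecutive copies of `ab`. -/
def abWord (H : ℕ) : List (Fin 2) :=
  (List.replicate H ([0, 1] : List (Fin 2))).flatten

namespace NFA

variable {α σ : Type*} {M : NFA α σ}

-- `x.length < p.supp.card` says that `p` visits pairwise distinct states.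
theorem Path.exists_path_of_mem_supp [DecidableEq σ] {s t u : σ} {x : List α} (p : M.Path t u x)
    (hp : x.length < p.supp.card) (hs : s ∈ p.supp) :
    ∃ y, ∃ q : M.Path s u y, y.length < q.supp.card := by
  induction p with
  | nil t =>
    obtain rfl : s = t := by simpa using hs
    exact ⟨[], .nil s, by simp⟩
  | cons t' t u a x h p ih =>
    by_cases hst : s = t
    · exact hst ▸ ⟨_, .cons t' t u a x h p, hp⟩
    · have hlt : x.length < p.supp.card := by
        have := Finset.card_union_le {t} p.supp
        simp only [Path.supp, List.length_cons, Finset.card_singleton] at hp this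
        omega
      exact ih hlt (by simpa [hst] using hs)

theorem Path.exists_path_length_lt_card_supp [DecidableEq σ] {s u : σ} {x : List α}
    (p : M.Path s u x) : ∃ y, ∃ q : M.Path s u y, y.length < q.supp.card := by
  induction p with
  | nil s => exact ⟨[], .nil s, by simp⟩
  | cons t s u a x h p ih =>
    obtain ⟨y, q, hq⟩ := ih
    by_cases hs : s ∈ q.supp
    · exact q.exists_path_of_mem_supp hq hs
    · refine ⟨a :: y, .cons t s u a y h q, ?_⟩
      simp only [Path.supp, List.length_cons]
      rw [Finset.singleton_union, Finset.card_insert_of_notMem hs]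
      omega

theorem Path.exists_path_length_lt_card [Fintype σ] {s u : σ} {x : List α} (p : M.Path s u x) :
    ∃ y, y.length < Fintype.card σ ∧ Nonempty (M.Path s u y) := by
  classical
  obtain ⟨y, q, hq⟩ := p.exists_path_length_lt_card_supp
  exact ⟨y, hq.trans_le q.supp.card_le_univ, ⟨q⟩⟩

theorem exists_mem_accepts_length_lt_card [Fintype σ] {x : List α} (hx : x ∈ M.accepts) :
    ∃ y ∈ M.accepts, y.length < Fintype.card σ := by
  obtain ⟨s, hs, t, ht, ⟨p⟩⟩ := accepts_iff_exists_path.mp hx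
  obtain ⟨y, hy, hp⟩ := p.exists_path_length_lt_card
  exact ⟨y, accepts_iff_exists_path.mpr ⟨s, hs, t, ht, hp⟩, hy⟩

end NFA

theorem sum_parikh {m : ℕ} (w : List (Fin m)) : ∑ i, parikh w i = w.length := by
  simpa [parikh] using
    Multiset.sum_count_eq_card (m := (w : Multiset (Fin m))) fun _ _ => Finset.mem_univ _

theorem length_eq_of_parikh_eq {m : ℕ} {v w : List (Fin m)} (h : parikh v = parikh w) :
    v.length = w.length := by
  rw [← sum_parikh, ← sum_parikh, h]

theorem parikhImage_singleton {m : ℕ} (w : List (Fin m)) : parikhImage {w} = {parikh w} :=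
  Set.image_singleton

theorem length_abWord (H : ℕ) : (abWord H).length = 2 * H := by
  simp [abWord, mul_comm]

theorem nfa_parikh_equivalent_ab_power_lower_bound_general (H : ℕ)
    (σ : Type) [Fintype σ] (A : NFA (Fin 2) σ)
    (hPar : parikhImage A.accepts = parikhImage {abWord H}) :
    2 * H + 1 ≤ Fintype.card σ := by
  rw [parikhImage_singleton] at hPar
  have hlength : ∀ x ∈ A.accepts, x.length = 2 * H := fun x hx => by
    have : parikh x ∈ parikhImage A.accepts := ⟨x, hx, rfl⟩
    rw [hPar] at this
    rw [length_eq_of_parikh_eq this, length_abWord]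
  obtain ⟨x, hx, -⟩ : parikh (abWord H) ∈ parikhImage A.accepts :=
    hPar ▸ Set.mem_singleton _
  obtain ⟨y, hy, hlt⟩ := NFA.exists_mem_accepts_length_lt_card hx
  rw [hlength y hy] at hlt
  exact hlt

/-- For every `H ≥ 1`, every NFA accepting a language Parikh equivalent
to the singleton language `{(ab)^H}` has at least `2H + 1` states. -/
theorem nfa_parikh_equivalent_ab_power_lower_bound (H : ℕ) (hH : 1 ≤ H)
    (σ : Type) [Fintype σ] (A : NFA (Fin 2) σ)
    (hPar : parikhImage A.accepts = parikhImage {abWord H}) :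
    2 * H + 1 ≤ Fintype.card σ :=
  nfa_parikh_equivalent_ab_power_lower_bound_general H σ A hPar
end
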